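/- arXiv:1606.07979 — 11 statements merged into one kernel-verified Lean document; each statement's English description precedes it below -/
import Mathlib

section
/- A subset S of the positive reals satisfies the 4-values condition if and only if the binary operation a ⊕_S b := sup{x ∈ S : x ≤ a + b} on S is associative. -/
def FourValues (S : Set ℝ) : Prop :=
  ∀ a ∈ S, ∀ b ∈ S, ∀ c ∈ S, ∀ d ∈ S,
    (∃ x ∈ S, |a - b| ≤ x ∧ x ≤ a + b ∧ |c - d| ≤ x ∧ x ≤ c + d) →
    (∃ y ∈ S, |a - c| ≤ y ∧ y ≤ a + c ∧ |b - d| ≤ y ∧ y ≤ b + d)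

theorem stmt1 (S : Set ℝ) (hSpos : ∀ s ∈ S, 0 < s)
    (op : ℝ → ℝ → ℝ)
    (hop : ∀ a ∈ S, ∀ b ∈ S, IsGreatest {x | x ∈ S ∧ x ≤ a + b} (op a b)) :
    FourValues S ↔ ∀ a ∈ S, ∀ b ∈ S, ∀ c ∈ S, op (op a b) c = op a (op b c) := by
  have hmem : ∀ a ∈ S, ∀ b ∈ S, op a b ∈ S := fun a ha b hb => (hop a ha b hb).1.1
  have hle : ∀ a ∈ S, ∀ b ∈ S, op a b ≤ a + b := fun a ha b hb => (hop a ha b hb).1.2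
  have hub : ∀ a ∈ S, ∀ b ∈ S, ∀ x ∈ S, x ≤ a + b → x ≤ op a b :=
    fun a ha b hb x hx hxle => (hop a ha b hb).2 ⟨hx, hxle⟩
  have hla : ∀ a ∈ S, ∀ b ∈ S, a ≤ op a b := fun a ha b hb =>
    hub a ha b hb a ha (by linarith [hSpos b hb])
  have hlb : ∀ a ∈ S, ∀ b ∈ S, b ≤ op a b := fun a ha b hb =>
    hub a ha b hb b hb (by linarith [hSpos a ha])
  have hcomm : ∀ a ∈ S, ∀ b ∈ S, op a b = op b a := fun a ha b hb =>
    (hop a ha b hb).unique (by simpa [add_comm] using hop b hb a ha)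
  constructor
  · intro h4
    have key : ∀ a ∈ S, ∀ b ∈ S, ∀ c ∈ S, op (op a b) c ≤ a + op b c := by
      intro a ha b hb c hc
      have hum : op a b ∈ S := hmem a ha b hb
      have hwm : op (op a b) c ∈ S := hmem (op a b) hum c hc
      have hu1 : a ≤ op a b := hla a ha b hb
      have hu2 : b ≤ op a b := hlb a ha b hb
      have hu3 : op a b ≤ a + b := hle a ha b hb
      have hw1 : op a b ≤ op (op a b) c := hla (op a b) hum c hc
      have hw2 : c ≤ op (op a b) c := hlb (op a b) hum c hc
      have hw3 : op (op a b) c ≤ op a b + c := hle (op a b) hum c hc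
      obtain ⟨y, hy, hy1, hy2, hy3, hy4⟩ :=
        h4 a ha b hb (op (op a b) c) hwm c hc
          ⟨op a b, hum, by
            rw [abs_sub_le_iff]
            constructor <;> linarith [hSpos a ha, hSpos b hb], hu3, by
            rw [abs_sub_le_iff]
            constructor <;> linarith [hSpos c hc], by linarith [hSpos c hc]⟩
      rw [abs_sub_le_iff] at hy1
      have hyv : y ≤ op b c := hub b hb c hc y hy hy4
      linarith [hy1.2]
    intro a ha b hb c hc
    have hbc : op b c ∈ S := hmem b hb c hc
    have hab : op a b ∈ S := hmem a ha b hb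
    have hcb : op c b ∈ S := hmem c hc b hb
    have le1 : op (op a b) c ≤ op a (op b c) :=
      hub a ha (op b c) hbc _ (hmem (op a b) hab c hc) (key a ha b hb c hc)
    have le2 : op a (op b c) ≤ op (op a b) c := by
      have e1 : op a (op b c) = op (op c b) a := by
        rw [hcomm a ha (op b c) hbc, hcomm b hb c hc]
      have h2 : op (op c b) a ≤ c + op b a := key c hc b hb a ha
      rw [hcomm b hb a ha] at h2
      have h3 : op (op c b) a ≤ op c (op a b) :=
        hub c hc (op a b) hab _ (hmem (op c b) hcb a ha) h2
      rw [hcomm c hc (op a b) hab] at h3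
      rw [e1]; exact h3
    exact le_antisymm le1 le2
  · rintro hassoc a ha b hb c hc d hd ⟨x, hx, hx1, hx2, hx3, hx4⟩
    rw [abs_sub_le_iff] at hx1 hx3
    have hxcd : x ≤ op c d := hub c hc d hd x hx hx4
    have hxab : x ≤ op a b := hub a ha b hb x hx hx2
    have hac : op a c ∈ S := hmem a ha c hc
    have hbd : op b d ∈ S := hmem b hb d hd
    -- b ≤ op a c + d
    have h_b : b ≤ op a c + d := by
      have h1 : b ≤ op a (op c d) :=
        hub a ha (op c d) (hmem c hc d hd) b hb (by linarith [hx1.2])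
      rw [← hassoc a ha c hc d hd] at h1
      linarith [hle (op a c) hac d hd]
    -- d ≤ op a c + b
    have h_d : d ≤ op a c + b := by
      have h1 : d ≤ op c (op a b) :=
        hub c hc (op a b) (hmem a ha b hb) d hd (by linarith [hx3.2])
      rw [← hassoc c hc a ha b hb] at h1
      have h2 := hle (op c a) (hmem c hc a ha) b hb
      rw [hcomm c hc a ha] at h2
      have h3 : op (op c a) b ≤ op a c + b := by rw [hcomm c hc a ha] at *; linarith
      linarith
    -- a ≤ op b d + c
    have h_a : a ≤ op b d + c := by
      have h1 : a ≤ op b (op d c) := by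
        rw [hcomm d hd c hc]
        exact hub b hb (op c d) (hmem c hc d hd) a ha (by linarith [hx1.1])
      rw [← hassoc b hb d hd c hc] at h1
      linarith [hle (op b d) hbd c hc]
    -- c ≤ op b d + a
    have h_c : c ≤ op b d + a := by
      have h1 : c ≤ op d (op b a) := by
        rw [hcomm b hb a ha]
        exact hub d hd (op a b) (hmem a ha b hb) c hc (by linarith [hx3.1])
      rw [← hassoc d hd b hb a ha] at h1
      have h2 := hle (op d b) (hmem d hd b hb) a ha
      rw [hcomm d hd b hb] at h1 h2
      linarith
    by_cases hcase : op a c ≤ b + d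
    · refine ⟨op a c, hac, ?_, hle a ha c hc, ?_, hcase⟩
      · rw [abs_sub_le_iff]
        constructor <;> linarith [hla a ha c hc, hlb a ha c hc, hSpos a ha, hSpos c hc]
      · rw [abs_sub_le_iff]
        constructor <;> linarith
    · push_neg at hcase
      refine ⟨op b d, hbd, ?_, ?_, ?_, hle b hb d hd⟩
      · rw [abs_sub_le_iff]
        constructor <;> linarith
      · linarith [hle b hb d hd, hle a ha c hc]
      · rw [abs_sub_le_iff]
        constructor <;> linarith [hla b hb d hd, hlb b hb d hd, hSpos b hb, hSpos d hd]
end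

section
/- Let S be a finite subset of the positive reals satisfying the 4-values condition. Let G be a finite S-metric graph (a symmetric irreflexive partial S-edge-labelled graph with a strong completion to an S-metric space). Define d'(u,v) to be the minimal ⊕_S-length over walks from u to v. Then setting the distance of every pair of distinct vertices to d' yields an S-metric space extending G. -/
def IsSMetric (S : Set ℝ) {V : Type} (d : V → V → ℝ) : Prop :=
  (∀ u v, d u v = 0 ↔ u = v) ∧ (∀ u v, d u v = d v u) ∧
  (∀ u v w, d u w ≤ d u v + d v w) ∧ (∀ u v, u ≠ v → d u v ∈ S)

/-- The `⊕_S`-length of a walk `p` (a list of vertices) with edge labels `lab`. -/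
def oplusLen (op : ℝ → ℝ → ℝ) {V : Type} (lab : V → V → ℝ) (p : List V) : ℝ :=
  match (p.zip p.tail).map fun q => lab q.1 q.2 with
  | [] => 0
  | a :: r => r.foldl op a

/-- `p` is a walk from `u` to `v` in the graph with edge relation `E`. -/
def IsWalk {V : Type} (E : V → V → Prop) (u v : V) (p : List V) : Prop :=
  p.head? = some u ∧ p.getLast? = some v ∧ List.Chain' E p ∧ 2 ≤ p.length

/-! ### Auxiliary definitions and lemmas -/

section Aux

variable {S : Finset ℝ} {op : ℝ → ℝ → ℝ}

/-- Hypothesis package about `op`. -/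
def OpHyp (S : Finset ℝ) (op : ℝ → ℝ → ℝ) : Prop :=
  ∀ a ∈ (S : Set ℝ), ∀ b ∈ (S : Set ℝ),
    IsGreatest {x | x ∈ (S : Set ℝ) ∧ x ≤ a + b} (op a b)

theorem op_mem (hop : OpHyp S op) {a b : ℝ} (ha : a ∈ (S : Set ℝ)) (hb : b ∈ (S : Set ℝ)) :
    op a b ∈ (S : Set ℝ) := (hop a ha b hb).1.1

theorem op_le_add (hop : OpHyp S op) {a b : ℝ} (ha : a ∈ (S : Set ℝ)) (hb : b ∈ (S : Set ℝ)) :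
    op a b ≤ a + b := (hop a ha b hb).1.2

theorem le_op (hop : OpHyp S op) {a b x : ℝ} (ha : a ∈ (S : Set ℝ)) (hb : b ∈ (S : Set ℝ))
    (hx : x ∈ (S : Set ℝ)) (hxle : x ≤ a + b) : x ≤ op a b :=
  (hop a ha b hb).2 ⟨hx, hxle⟩

theorem left_le_op (hSpos : ∀ s ∈ S, (0 : ℝ) < s) (hop : OpHyp S op) {a b : ℝ}
    (ha : a ∈ (S : Set ℝ)) (hb : b ∈ (S : Set ℝ)) : a ≤ op a b :=
  le_op hop ha hb ha (by have := hSpos b hb; linarith)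

theorem right_le_op (hSpos : ∀ s ∈ S, (0 : ℝ) < s) (hop : OpHyp S op) {a b : ℝ}
    (ha : a ∈ (S : Set ℝ)) (hb : b ∈ (S : Set ℝ)) : b ≤ op a b :=
  le_op hop ha hb hb (by have := hSpos a ha; linarith)

theorem op_comm (hop : OpHyp S op) {a b : ℝ} (ha : a ∈ (S : Set ℝ)) (hb : b ∈ (S : Set ℝ)) :
    op a b = op b a := by
  apply le_antisymm
  · exact le_op hop hb ha (op_mem hop ha hb) (by have := op_le_add hop ha hb; linarith)
  · exact le_op hop ha hb (op_mem hop hb ha) (by have := op_le_add hop hb ha; linarith)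

theorem op_assoc_le (hSpos : ∀ s ∈ S, (0 : ℝ) < s) (h4 : FourValues ↑S) (hop : OpHyp S op)
    {a b c : ℝ} (ha : a ∈ (S : Set ℝ)) (hb : b ∈ (S : Set ℝ)) (hc : c ∈ (S : Set ℝ)) :
    op (op a b) c ≤ op a (op b c) := by
  set w := op a b with hw
  set m := op w c with hm
  have hwS : w ∈ (S : Set ℝ) := op_mem hop ha hb
  have hmS : m ∈ (S : Set ℝ) := op_mem hop hwS hc
  have haw : a ≤ w := left_le_op hSpos hop ha hb
  have hbw : b ≤ w := right_le_op hSpos hop ha hb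
  have hwab : w ≤ a + b := op_le_add hop ha hb
  have hwm : w ≤ m := left_le_op hSpos hop hwS hc
  have hcm : c ≤ m := right_le_op hSpos hop hwS hc
  have hmwc : m ≤ w + c := op_le_add hop hwS hc
  have hbpos := hSpos b hb
  have hapos := hSpos a ha
  have hcpos := hSpos c hc
  -- apply the 4-values condition with (b, a, c, m), witness w
  obtain ⟨y, hyS, hy1, hy2, hy3, hy4⟩ :=
    h4 b hb a ha c hc m hmS
      ⟨w, hwS, by rw [abs_sub_le_iff]; constructor <;> linarith,
        by linarith, by rw [abs_sub_le_iff]; constructor <;> linarith, by linarith⟩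
  -- y ∈ S, |b - c| ≤ y ≤ b + c, |a - m| ≤ y ≤ a + m
  have hybc : y ≤ op b c := le_op hop hb hc hyS hy2
  have hma : m - a ≤ y := by
    have h := abs_sub_le_iff.mp hy3
    linarith [h.2]
  have hmle : m ≤ a + op b c := by linarith
  exact le_op hop ha (op_mem hop hb hc) hmS hmle

theorem op_assoc (hSpos : ∀ s ∈ S, (0 : ℝ) < s) (h4 : FourValues ↑S) (hop : OpHyp S op)
    {a b c : ℝ} (ha : a ∈ (S : Set ℝ)) (hb : b ∈ (S : Set ℝ)) (hc : c ∈ (S : Set ℝ)) :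
    op (op a b) c = op a (op b c) := by
  apply le_antisymm (op_assoc_le hSpos h4 hop ha hb hc)
  have h1 : op a (op b c) = op (op c b) a := by
    rw [op_comm hop ha (op_mem hop hb hc), op_comm hop hb hc]
  have h2 : op (op c b) a ≤ op c (op b a) := op_assoc_le hSpos h4 hop hc hb ha
  have h3 : op c (op b a) = op (op a b) c := by
    rw [op_comm hop hc (op_mem hop hb ha), op_comm hop hb ha]
  rw [h1, ← h3]
  exact h2

/-! ### Fold lemmas -/

theorem foldl_mem (hop : OpHyp S op) :
    ∀ (l : List ℝ) {a : ℝ}, a ∈ (S : Set ℝ) → (∀ x ∈ l, x ∈ (S : Set ℝ)) →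
      l.foldl op a ∈ (S : Set ℝ)
  | [], _, ha, _ => ha
  | x :: l, a, ha, hl => by
    simpa using foldl_mem hop l (op_mem hop ha (hl x (by simp)))
      (fun y hy => hl y (by simp [hy]))

theorem foldl_pull (hSpos : ∀ s ∈ S, (0 : ℝ) < s) (h4 : FourValues ↑S) (hop : OpHyp S op) :
    ∀ (l : List ℝ) {a c : ℝ}, a ∈ (S : Set ℝ) → c ∈ (S : Set ℝ) →
      (∀ x ∈ l, x ∈ (S : Set ℝ)) →
      l.foldl op (op a c) = op a (l.foldl op c)
  | [], _, _, _, _, _ => rfl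
  | x :: l, a, c, ha, hc, hl => by
    have hxS : x ∈ (S : Set ℝ) := hl x (by simp)
    have hl' : ∀ z ∈ l, z ∈ (S : Set ℝ) := fun z hz => hl z (by simp [hz])
    calc (x :: l).foldl op (op a c) = l.foldl op (op (op a c) x) := rfl
      _ = l.foldl op (op a (op c x)) := by rw [op_assoc hSpos h4 hop ha hc hxS]
      _ = op a (l.foldl op (op c x)) :=
          foldl_pull hSpos h4 hop l ha (op_mem hop hc hxS) hl'
      _ = op a ((x :: l).foldl op c) := rfl

/-- Combined value of a nonempty list of labels. -/
def oplus0 (op : ℝ → ℝ → ℝ) : List ℝ → ℝ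
  | [] => 0
  | a :: r => r.foldl op a

theorem oplus0_mem (hop : OpHyp S op) {l : List ℝ} (hne : l ≠ [])
    (hl : ∀ x ∈ l, x ∈ (S : Set ℝ)) : oplus0 op l ∈ (S : Set ℝ) := by
  cases l with
  | nil => exact absurd rfl hne
  | cons c cs =>
    exact foldl_mem hop cs (hl c (by simp)) (fun x hx => hl x (by simp [hx]))

theorem oplus0_cons (hSpos : ∀ s ∈ S, (0 : ℝ) < s) (h4 : FourValues ↑S) (hop : OpHyp S op)
    {x : ℝ} {l : List ℝ} (hne : l ≠ []) (hx : x ∈ (S : Set ℝ))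
    (hl : ∀ y ∈ l, y ∈ (S : Set ℝ)) : oplus0 op (x :: l) = op x (oplus0 op l) := by
  cases l with
  | nil => exact absurd rfl hne
  | cons c cs =>
    show (c :: cs).foldl op x = op x (cs.foldl op c)
    have : (c :: cs).foldl op x = cs.foldl op (op x c) := rfl
    rw [this, foldl_pull hSpos h4 hop cs hx (hl c (by simp)) (fun z hz => hl z (by simp [hz]))]

theorem oplus0_snoc (op : ℝ → ℝ → ℝ) {l : List ℝ} (hne : l ≠ []) (x : ℝ) :
    oplus0 op (l ++ [x]) = op (oplus0 op l) x := by
  cases l with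
  | nil => exact absurd rfl hne
  | cons c cs =>
    show ((cs ++ [x]).foldl op c) = op (cs.foldl op c) x
    rw [List.foldl_append]
    rfl

theorem oplus0_append (hSpos : ∀ s ∈ S, (0 : ℝ) < s) (h4 : FourValues ↑S) (hop : OpHyp S op)
    {l1 l2 : List ℝ} (h1 : l1 ≠ []) (h2 : l2 ≠ [])
    (hl1 : ∀ x ∈ l1, x ∈ (S : Set ℝ)) (hl2 : ∀ x ∈ l2, x ∈ (S : Set ℝ)) :
    oplus0 op (l1 ++ l2) = op (oplus0 op l1) (oplus0 op l2) := by
  cases l1 with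
  | nil => exact absurd rfl h1
  | cons c cs =>
    cases l2 with
    | nil => exact absurd rfl h2
    | cons d ds =>
      show ((cs ++ d :: ds).foldl op c) = op (cs.foldl op c) (ds.foldl op d)
      rw [List.foldl_append]
      have h3 : (d :: ds).foldl op (cs.foldl op c) = ds.foldl op (op (cs.foldl op c) d) := rfl
      rw [h3, foldl_pull hSpos h4 hop ds
        (foldl_mem hop cs (hl1 c (by simp)) (fun z hz => hl1 z (by simp [hz])))
        (hl2 d (by simp)) (fun z hz => hl2 z (by simp [hz]))]

theorem oplus0_reverse (hSpos : ∀ s ∈ S, (0 : ℝ) < s) (h4 : FourValues ↑S) (hop : OpHyp S op) :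
    ∀ (l : List ℝ), (∀ x ∈ l, x ∈ (S : Set ℝ)) → oplus0 op l.reverse = oplus0 op l
  | [], _ => rfl
  | [x], _ => rfl
  | x :: y :: l, hl => by
    have hxS : x ∈ (S : Set ℝ) := hl x (by simp)
    have hl' : ∀ z ∈ y :: l, z ∈ (S : Set ℝ) := fun z hz => hl z (by simp [List.mem_cons] at hz ⊢; tauto)
    have hrevne : (y :: l).reverse ≠ [] := by simp
    calc oplus0 op (x :: y :: l).reverse
        = oplus0 op ((y :: l).reverse ++ [x]) := by rw [List.reverse_cons]
      _ = op (oplus0 op (y :: l).reverse) x := oplus0_snoc op hrevne x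
      _ = op (oplus0 op (y :: l)) x := by rw [oplus0_reverse hSpos h4 hop (y :: l) hl']
      _ = op x (oplus0 op (y :: l)) := op_comm hop (oplus0_mem hop (by simp) hl') hxS
      _ = oplus0 op (x :: y :: l) := (oplus0_cons hSpos h4 hop (by simp) hxS hl').symm

/-! ### Labels of a walk -/

variable {V : Type}

/-- The list of edge labels along a list of vertices. -/
def labs (lab : V → V → ℝ) : List V → List ℝ
  | [] => []
  | [_] => []
  | x :: y :: r => lab x y :: labs lab (y :: r)

theorem labs_eq (lab : V → V → ℝ) :
    ∀ p : List V, ((p.zip p.tail).map fun q => lab q.1 q.2) = labs lab p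
  | [] => rfl
  | [_] => rfl
  | x :: y :: r => by
    simpa [labs] using labs_eq lab (y :: r)

theorem oplusLen_eq (op : ℝ → ℝ → ℝ) (lab : V → V → ℝ) (p : List V) :
    oplusLen op lab p = oplus0 op (labs lab p) := by
  unfold oplusLen
  rw [labs_eq]
  rfl

theorem labs_ne_nil (lab : V → V → ℝ) :
    ∀ {p : List V}, 2 ≤ p.length → labs lab p ≠ []
  | _ :: _ :: _, _ => by simp [labs]

theorem labs_mem_S {E : V → V → Prop} {lab : V → V → ℝ}
    (hlabS : ∀ u v, E u v → lab u v ∈ (S : Set ℝ)) :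
    ∀ {p : List V}, List.Chain' E p → ∀ x ∈ labs lab p, x ∈ (S : Set ℝ)
  | [], _, x, hx => by simp [labs] at hx
  | [_], _, x, hx => by simp [labs] at hx
  | a :: b :: r, hch, x, hx => by
    rw [List.Chain', List.isChain_cons_cons] at hch
    simp only [labs, List.mem_cons] at hx
    rcases hx with rfl | hx
    · exact hlabS a b hch.1
    · exact labs_mem_S hlabS hch.2 x hx

theorem labs_snoc (lab : V → V → ℝ) :
    ∀ (p : List V) (z x : V),
      labs lab ((p ++ [z]) ++ [x]) = labs lab (p ++ [z]) ++ [lab z x]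
  | [], z, x => rfl
  | [a], z, x => rfl
  | a :: b :: p, z, x => by
    have h := labs_snoc lab (b :: p) z x
    simp only [List.cons_append, labs] at h ⊢
    exact congrArg (List.cons (lab a b)) h

theorem labs_reverse {lab : V → V → ℝ} (hlabsym : ∀ u v, lab u v = lab v u) :
    ∀ p : List V, labs lab p.reverse = (labs lab p).reverse
  | [] => rfl
  | [_] => rfl
  | x :: y :: r => by
    have IH := labs_reverse hlabsym (y :: r)
    have h1 : (x :: y :: r).reverse = (r.reverse ++ [y]) ++ [x] := by simp
    have h2 : (y :: r).reverse = r.reverse ++ [y] := by simp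
    rw [h1, labs_snoc, ← h2, IH]
    simp [labs, hlabsym y x]

theorem labs_glue (lab : V → V → ℝ) :
    ∀ (p q : List V) (v : V), p.getLast? = some v → q.head? = some v →
      labs lab (p ++ q.tail) = labs lab p ++ labs lab q
  | [], _, _, hp, _ => by simp at hp
  | [u], q, v, hp, hq => by
    simp at hp
    subst hp
    cases q with
    | nil => simp at hq
    | cons w q' =>
      simp at hq
      subst hq
      simp [labs]
  | a :: b :: r, q, v, hp, hq => by
    have hp' : (b :: r).getLast? = some v := by
      rw [← hp]; rfl
    have IH := labs_glue lab (b :: r) q v hp' hq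
    simp only [List.cons_append, labs] at IH ⊢
    exact congrArg (List.cons (lab a b)) IH

/-! ### Walk lemmas -/

theorem walk_reverse {E : V → V → Prop} (hEsym : ∀ u v, E u v → E v u)
    {u v : V} {p : List V} (h : IsWalk E u v p) : IsWalk E v u p.reverse := by
  obtain ⟨h1, h2, h3, h4⟩ := h
  refine ⟨?_, ?_, ?_, ?_⟩
  · rw [List.head?_reverse]; exact h2
  · rw [List.getLast?_reverse]; exact h1
  · rw [List.Chain', List.isChain_reverse]
    exact h3.imp (fun a b hab => hEsym a b hab)
  · simpa using h4

theorem walk_append {E : V → V → Prop} {u v w : V} {p q : List V}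
    (hp : IsWalk E u v p) (hq : IsWalk E v w q) : IsWalk E u w (p ++ q.tail) := by
  obtain ⟨hp1, hp2, hp3, hp4⟩ := hp
  obtain ⟨hq1, hq2, hq3, hq4⟩ := hq
  obtain ⟨a, b, q', rfl⟩ : ∃ a b q', q = a :: b :: q' := by
    match q, hq4 with
    | a :: b :: q', _ => exact ⟨a, b, q', rfl⟩
  have hav : a = v := by simpa using hq1
  subst hav
  have hpne : p ≠ [] := by
    intro h; subst h; simp at hp1
  refine ⟨?_, ?_, ?_, ?_⟩
  · rw [List.head?_append_of_ne_nil _ hpne]; exact hp1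
  · show (p ++ b :: q').getLast? = some w
    rw [List.getLast?_append]
    have : (b :: q').getLast? = some w := by
      rw [← hq2]; rfl
    rw [this]
    rfl
  · apply List.IsChain.append hp3 (List.isChain_cons_cons.mp hq3).2
    intro x hx y hy
    rw [hp2] at hx
    simp at hx hy
    subst hx; subst hy
    exact (List.isChain_cons_cons.mp hq3).1
  · have h1 : 1 ≤ p.length := by
      cases p with
      | nil => exact absurd rfl hpne
      | cons _ _ => simp
    simp only [List.length_append, List.tail_cons, List.length_cons]
    omega

end Aux

theorem stmt2 (S : Finset ℝ) (hSpos : ∀ s ∈ S, (0 : ℝ) < s) (h4 : FourValues ↑S)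
    (op : ℝ → ℝ → ℝ)
    (hop : ∀ a ∈ (S : Set ℝ), ∀ b ∈ (S : Set ℝ),
      IsGreatest {x | x ∈ (S : Set ℝ) ∧ x ≤ a + b} (op a b))
    (V : Type) [Fintype V] (E : V → V → Prop)
    (hEsym : ∀ u v, E u v → E v u) (hEirr : ∀ u, ¬ E u u)
    (lab : V → V → ℝ) (hlabsym : ∀ u v, lab u v = lab v u)
    (hlabS : ∀ u v, E u v → lab u v ∈ (S : Set ℝ))
    -- G is an S-metric graph: it has a strong completion to an S-metric space
    (hcomp : ∃ d : V → V → ℝ, IsSMetric ↑S d ∧ ∀ u v, E u v → d u v = lab u v)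
    (d' : V → V → ℝ)
    (hd'0 : ∀ u, d' u u = 0)
    -- d'(u,v) is the minimal ⊕_S-length of a walk from u to v
    (hd'min : ∀ u v, u ≠ v →
      IsLeast {x | ∃ p, IsWalk E u v p ∧ x = oplusLen op lab p} (d' u v)) :
    IsSMetric ↑S d' ∧ ∀ u v, E u v → d' u v = lab u v := by
  have hop' : OpHyp S op := hop
  -- basic facts about walks
  have hlabs_mem : ∀ {p : List V} {u v : V}, IsWalk E u v p →
      ∀ x ∈ labs lab p, x ∈ (S : Set ℝ) := by
    intro p u v hp
    exact labs_mem_S hlabS hp.2.2.1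
  have hlabs_ne : ∀ {p : List V} {u v : V}, IsWalk E u v p → labs lab p ≠ [] := by
    intro p u v hp
    exact labs_ne_nil lab hp.2.2.2
  -- oplusLen of a walk lies in S
  have hoplen_mem : ∀ {p : List V} {u v : V}, IsWalk E u v p →
      oplusLen op lab p ∈ (S : Set ℝ) := by
    intro p u v hp
    rw [oplusLen_eq]
    exact oplus0_mem hop' (hlabs_ne hp) (hlabs_mem hp)
  -- d' u v ∈ S for u ≠ v
  have hd'S : ∀ u v, u ≠ v → d' u v ∈ (S : Set ℝ) := by
    intro u v huv
    obtain ⟨p, hp, hval⟩ := (hd'min u v huv).1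
    rw [hval]
    exact hoplen_mem hp
  have hd'pos : ∀ u v, u ≠ v → 0 < d' u v := fun u v huv => hSpos _ (hd'S u v huv)
  -- oplusLen is invariant under reversing a walk
  have hoplen_rev : ∀ {p : List V} {u v : V}, IsWalk E u v p →
      oplusLen op lab p.reverse = oplusLen op lab p := by
    intro p u v hp
    rw [oplusLen_eq, oplusLen_eq, labs_reverse hlabsym]
    exact oplus0_reverse hSpos h4 hop' _ (hlabs_mem hp)
  -- symmetry of d'
  have hsymm : ∀ u v, d' u v = d' v u := by
    have key : ∀ u v, u ≠ v → d' v u ≤ d' u v := by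
      intro u v huv
      obtain ⟨p, hp, hval⟩ := (hd'min u v huv).1
      have := (hd'min v u (Ne.symm huv)).2
        ⟨p.reverse, walk_reverse hEsym hp, (hoplen_rev hp).symm⟩
      rw [hval]
      exact this
    intro u v
    by_cases huv : u = v
    · subst huv; rfl
    · exact le_antisymm (key v u (Ne.symm huv)) (key u v huv)
  -- triangle inequality
  have htri : ∀ u v w, d' u w ≤ d' u v + d' v w := by
    intro u v w
    by_cases huv : u = v
    · subst huv; rw [hd'0]; linarith
    by_cases hvw : v = w
    · subst hvw; rw [hd'0]; linarith
    by_cases huw : u = w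
    · subst huw
      rw [hd'0]
      have := hd'pos u v huv
      have := hd'pos v u (Ne.symm huv)
      rw [hsymm v u]
      linarith
    obtain ⟨p, hp, hvalp⟩ := (hd'min u v huv).1
    obtain ⟨q, hq, hvalq⟩ := (hd'min v w hvw).1
    have hwalk : IsWalk E u w (p ++ q.tail) := walk_append hp hq
    have hglue : labs lab (p ++ q.tail) = labs lab p ++ labs lab q :=
      labs_glue lab p q v hp.2.1 hq.1
    have hlen : oplusLen op lab (p ++ q.tail)
        = op (oplusLen op lab p) (oplusLen op lab q) := by
      rw [oplusLen_eq, oplusLen_eq, oplusLen_eq, hglue]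
      exact oplus0_append hSpos h4 hop' (hlabs_ne hp) (hlabs_ne hq)
        (hlabs_mem hp) (hlabs_mem hq)
    have hle : d' u w ≤ oplusLen op lab (p ++ q.tail) :=
      (hd'min u w huw).2 ⟨p ++ q.tail, hwalk, rfl⟩
    have hle2 : op (oplusLen op lab p) (oplusLen op lab q)
        ≤ oplusLen op lab p + oplusLen op lab q :=
      op_le_add hop' (hoplen_mem hp) (hoplen_mem hq)
    rw [hvalp, hvalq]
    calc d' u w ≤ oplusLen op lab (p ++ q.tail) := hle
      _ = op (oplusLen op lab p) (oplusLen op lab q) := hlen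
      _ ≤ oplusLen op lab p + oplusLen op lab q := hle2
  -- lower bound from the completion: d x y ≤ oplusLen of any walk
  obtain ⟨d, ⟨hdzero, hdsym, hdtri, hdS⟩, hdext⟩ := hcomp
  have hlower : ∀ (p : List V) (x y : V), IsWalk E x y p → d x y ≤ oplusLen op lab p := by
    intro p
    induction p with
    | nil => intro x y hw; exact absurd hw.1 (by simp)
    | cons a p ih =>
      intro x y hw
      obtain ⟨hw1, hw2, hw3, hw4⟩ := hw
      have hax : a = x := by simpa using hw1
      subst hax
      cases p with
      | nil => exact absurd hw4 (by simp)
      | cons b t =>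
      cases t with
      | nil =>
        have hby : b = y := by simpa using hw2
        have hE : E a b := (List.isChain_cons_cons.mp hw3).1
        have : oplusLen op lab [a, b] = lab a b := rfl
        rw [← hby, this, hdext a b hE]
      | cons c r =>
        have hE : E a b := (List.isChain_cons_cons.mp hw3).1
        have hwalk' : IsWalk E b y (b :: c :: r) :=
          ⟨rfl, by rw [← hw2]; rfl, (List.isChain_cons_cons.mp hw3).2, by simp⟩
        have hd1 : d b y ≤ oplusLen op lab (b :: c :: r) := ih b y hwalk'
        have htri' : d a y ≤ d a b + d b y := hdtri a b y
        have hdab : d a b = lab a b := hdext a b hE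
        have hcons : oplusLen op lab (a :: b :: c :: r)
            = op (lab a b) (oplusLen op lab (b :: c :: r)) := by
          rw [oplusLen_eq, oplusLen_eq]
          have hlabsc : labs lab (a :: b :: c :: r) = lab a b :: labs lab (b :: c :: r) := rfl
          rw [hlabsc]
          exact oplus0_cons hSpos h4 hop' (hlabs_ne hwalk') (hlabS a b hE)
            (hlabs_mem hwalk')
        rw [hcons]
        have hmemtail : oplusLen op lab (b :: c :: r) ∈ (S : Set ℝ) := hoplen_mem hwalk'
        by_cases hay : a = y
        · subst hay
          have : d a a = 0 := (hdzero a a).mpr rfl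
          rw [this]
          have := hSpos _ (op_mem hop' (hlabS a b hE) hmemtail)
          linarith
        · exact le_op hop' (hlabS a b hE) hmemtail (hdS a y hay) (by linarith)
  -- extension property
  have hext : ∀ u v, E u v → d' u v = lab u v := by
    intro u v hE
    have huv : u ≠ v := by
      intro h; subst h; exact hEirr u hE
    apply le_antisymm
    · have hw : IsWalk E u v [u, v] := ⟨rfl, rfl, List.isChain_pair.mpr hE, by simp⟩
      have : oplusLen op lab [u, v] = lab u v := rfl
      exact this ▸ (hd'min u v huv).2 ⟨[u, v], hw, rfl⟩
    · obtain ⟨p, hp, hval⟩ := (hd'min u v huv).1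
      have := hlower p u v hp
      rw [hdext u v hE] at this
      rw [hval]
      exact this
  refine ⟨⟨?_, hsymm, htri, fun u v huv => hd'S u v huv⟩, hext⟩
  intro u v
  constructor
  · intro h
    by_contra huv
    exact absurd h (ne_of_gt (hd'pos u v huv))
  · intro h; subst h; exact hd'0 u
end

section
/- Let S be a finite subset of the positive reals satisfying the 4-values condition with no jump numbers. Then for every a ∈ S with a ≠ max(S) there exists b ∈ S such that a < b ≤ a + min(S). -/
/-- `a` is a jump number of `T`: `a ∈ T`, `a` is not the maximum,
and `2a ≤ min {b ∈ T : b > a}`. -/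
def IsJump (T : Set ℝ) (a : ℝ) : Prop :=
  a ∈ T ∧ (∃ b ∈ T, a < b) ∧ ∀ b ∈ T, a < b → 2 * a ≤ b

lemma stmt4_aux (S : Finset ℝ) (hne : S.Nonempty) (hSpos : ∀ s ∈ S, (0 : ℝ) < s)
    (h4 : FourValues ↑S) (hnj : ∀ a, ¬ IsJump (↑S) a) :
    ∀ n : ℕ, ∀ a ∈ S, a ≠ S.max' hne → (S.filter (· < a)).card ≤ n →
      ∃ b ∈ S, a < b ∧ b ≤ a + S.min' hne := by
  intro n
  induction n with
  | zero =>
    intro a ha hmax hcard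
    set m := S.min' hne with hm
    have hmS : m ∈ S := S.min'_mem hne
    have hmpos : 0 < m := hSpos m hmS
    -- get b with a < b < 2a from no jump
    have halt : a < S.max' hne := lt_of_le_of_ne (S.le_max' a ha) hmax
    have hnj' := hnj a
    rw [IsJump] at hnj'
    push_neg at hnj'
    obtain ⟨b, hbS, hab, hb2a⟩ := hnj' (Finset.mem_coe.mpr ha)
      ⟨S.max' hne, Finset.mem_coe.mpr (S.max'_mem hne), halt⟩
    rw [Finset.mem_coe] at hbS
    by_cases hbm : b ≤ a + m
    · exact ⟨b, hbS, hab, hbm⟩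
    -- then m < a, so filter is nonempty, contradicting card ≤ 0
    · exfalso
      push_neg at hbm
      have hma : m < a := by
        have := hSpos b hbS
        have := S.min'_le a ha
        linarith
      have : m ∈ S.filter (· < a) := Finset.mem_filter.mpr ⟨hmS, hma⟩
      have : 0 < (S.filter (· < a)).card := Finset.card_pos.mpr ⟨m, this⟩
      omega
  | succ n ih =>
    intro a ha hmax hcard
    set m := S.min' hne with hm
    have hmS : m ∈ S := S.min'_mem hne
    have hmpos : 0 < m := hSpos m hmS
    have hapos : 0 < a := hSpos a ha
    have halt : a < S.max' hne := lt_of_le_of_ne (S.le_max' a ha) hmax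
    have hnj' := hnj a
    rw [IsJump] at hnj'
    push_neg at hnj'
    obtain ⟨b, hbS, hab, hb2a⟩ := hnj' (Finset.mem_coe.mpr ha)
      ⟨S.max' hne, Finset.mem_coe.mpr (S.max'_mem hne), halt⟩
    rw [Finset.mem_coe] at hbS
    by_cases hbm : b ≤ a + m
    · exact ⟨b, hbS, hab, hbm⟩
    push_neg at hbm
    have hbapos : 0 < b := hSpos b hbS
    -- T = elements ≥ b - a, nonempty since a ∈ T (b < 2a)
    have hba_lt_a : b - a < a := by linarith
    have haT : a ∈ S.filter (fun s => b - a ≤ s) :=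
      Finset.mem_filter.mpr ⟨ha, le_of_lt hba_lt_a⟩
    have hTne : (S.filter (fun s => b - a ≤ s)).Nonempty := ⟨a, haT⟩
    set x := (S.filter (fun s => b - a ≤ s)).min' hTne with hx
    have hxmem := (S.filter (fun s => b - a ≤ s)).min'_mem hTne
    rw [Finset.mem_filter] at hxmem
    obtain ⟨hxS, hbax⟩ := hxmem
    have hxa : x ≤ a := Finset.min'_le _ a haT
    have hmx : m < x := by linarith
    -- P = elements < x, contains m
    have hmP : m ∈ S.filter (· < x) := Finset.mem_filter.mpr ⟨hmS, hmx⟩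
    have hPne : (S.filter (· < x)).Nonempty := ⟨m, hmP⟩
    set p := (S.filter (· < x)).max' hPne with hp
    have hpmem := (S.filter (· < x)).max'_mem hPne
    rw [Finset.mem_filter] at hpmem
    obtain ⟨hpS, hpx⟩ := hpmem
    have hppos : 0 < p := hSpos p hpS
    -- p < b - a
    have hpba : p < b - a := by
      by_contra hcon
      push_neg at hcon
      have : x ≤ p := Finset.min'_le _ p (Finset.mem_filter.mpr ⟨hpS, hcon⟩)
      linarith
    have hpa : p < a := by linarith
    -- p is not the max
    have hpmax : p ≠ S.max' hne := by
      intro h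
      have := S.le_max' a ha
      rw [← h] at this
      linarith
    -- card decreases
    have hsub : S.filter (· < p) ⊂ S.filter (· < a) := by
      constructor
      · intro s hs
        rw [Finset.mem_filter] at hs ⊢
        exact ⟨hs.1, lt_trans hs.2 hpa⟩
      · intro hcon
        have := hcon (Finset.mem_filter.mpr ⟨hpS, hpa⟩)
        rw [Finset.mem_filter] at this
        exact lt_irrefl p this.2
    have hcard' : (S.filter (· < p)).card ≤ n := by
      have := Finset.card_lt_card hsub
      omega
    -- inductive hypothesis at p gives successor q with q ≤ p + m, and q ≥ x
    obtain ⟨q, hqS, hpq, hqpm⟩ := ih p hpS hpmax hcard'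
    have hxq : x ≤ q := by
      by_contra hcon
      push_neg at hcon
      have : q ≤ p := Finset.le_max' (S.filter (· < x)) q (Finset.mem_filter.mpr ⟨hqS, hcon⟩)
      linarith
    have hxpm : x ≤ p + m := le_trans hxq hqpm
    -- apply FourValues to (b, a, p, m) with witness x
    obtain ⟨y, hyS, hy1, hy2, hy3, hy4⟩ :=
      h4 b (Finset.mem_coe.mpr hbS) a (Finset.mem_coe.mpr ha)
        p (Finset.mem_coe.mpr hpS) m (Finset.mem_coe.mpr hmS)
        ⟨x, Finset.mem_coe.mpr hxS, by
          constructor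
          · rw [abs_le]; constructor <;> linarith
          constructor
          · linarith
          constructor
          · rw [abs_le]; constructor <;> linarith
          · linarith⟩
    rw [Finset.mem_coe] at hyS
    refine ⟨y, hyS, ?_, by linarith⟩
    have : b - p ≤ |b - p| := le_abs_self _
    linarith

theorem stmt4 (S : Finset ℝ) (hne : S.Nonempty) (hSpos : ∀ s ∈ S, (0 : ℝ) < s)
    (h4 : FourValues ↑S) (hnj : ∀ a, ¬ IsJump (↑S) a) :
    ∀ a ∈ S, a ≠ S.max' hne → ∃ b ∈ S, a < b ∧ b ≤ a + S.min' hne := by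
  intro a ha hmax
  exact stmt4_aux S hne hSpos h4 hnj (S.filter (· < a)).card a ha hmax le_rfl
end

section
/- Every hereditary Ramsey class of finite relational structures with the joint embedding property is an amalgamation class. -/
/-- A relational language: a type of relation symbols with arities. -/
structure Lang where
  sym : Type
  ar : sym → ℕ

/-- A relational structure for the language `L`. -/
structure Str (L : Lang) where
  V : Type
  rel : ∀ s : L.sym, (Fin (L.ar s) → V) → Prop

/-- `f` is an embedding of `A` into `B`. -/
def IsEmb {L : Lang} (A B : Str L) (f : A.V → B.V) : Prop :=
  Function.Injective f ∧ ∀ (s : L.sym) (t : Fin (L.ar s) → A.V),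
    A.rel s t ↔ B.rel s (f ∘ t)

/-- `K` is a Ramsey class: for all `A, B ∈ K` and all `k ≥ 1` there exists
`C ∈ K` such that every `k`-colouring of the copies (embeddings) of `A` in `C`
admits a copy of `B` in `C` all of whose copies of `A` are monochromatic. -/
def IsRamseyClass {L : Lang} (K : Str L → Prop) : Prop :=
  ∀ A B, K A → K B → ∀ k : ℕ, 1 ≤ k →
    ∃ C, K C ∧ ∀ χ : (A.V → C.V) → Fin k,
      ∃ g : B.V → C.V, IsEmb B C g ∧
        ∀ e1 e2 : A.V → B.V, IsEmb A B e1 → IsEmb A B e2 →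
          χ (g ∘ e1) = χ (g ∘ e2)

lemma IsEmb.comp {L : Lang} {A B C : Str L} {f : A.V → B.V} {g : B.V → C.V}
    (hf : IsEmb A B f) (hg : IsEmb B C g) : IsEmb A C (g ∘ f) := by
  refine ⟨hg.1.comp hf.1, fun s t => ?_⟩
  rw [hf.2 s t, hg.2 s (f ∘ t)]
  rfl

/-- Every hereditary Ramsey class of finite (rigid) relational structures with
the joint embedding property has the amalgamation property, hence is an
amalgamation class. -/
theorem stmt7 {L : Lang} (K : Str L → Prop)
    (hfin : ∀ A, K A → Finite A.V)
    (hhered : ∀ A B, K B → (∃ f : A.V → B.V, IsEmb A B f) → K A)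
    (hjep : ∀ A B, K A → K B →
      ∃ C, K C ∧ (∃ f : A.V → C.V, IsEmb A C f) ∧ (∃ g : B.V → C.V, IsEmb B C g))
    (hrigid : ∀ A, K A → ∀ f : A.V → A.V, IsEmb A A f → f = id)
    (hramsey : IsRamseyClass K) :
    ∀ A B1 B2, K A → K B1 → K B2 →
      ∀ (α1 : A.V → B1.V) (α2 : A.V → B2.V), IsEmb A B1 α1 → IsEmb A B2 α2 →
        ∃ C, K C ∧ ∃ (β1 : B1.V → C.V) (β2 : B2.V → C.V),
          IsEmb B1 C β1 ∧ IsEmb B2 C β2 ∧ ∀ x, β1 (α1 x) = β2 (α2 x) := by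
  intro A B1 B2 hA hB1 hB2 α1 α2 hα1 hα2
  classical
  obtain ⟨D, hD, ⟨f1, hf1⟩, ⟨f2, hf2⟩⟩ := hjep B1 B2 hB1 hB2
  obtain ⟨C, hC, hRam⟩ := hramsey A D hA hD 2 (by norm_num)
  set χ : (A.V → C.V) → Fin 2 := fun e =>
    if ∃ β : B1.V → C.V, IsEmb B1 C β ∧ β ∘ α1 = e then 1 else 0 with hχ
  obtain ⟨g, hg, hmono⟩ := hRam χ
  have h1 : χ (g ∘ (f1 ∘ α1)) = 1 := by
    have hP : ∃ β : B1.V → C.V, IsEmb B1 C β ∧ β ∘ α1 = g ∘ (f1 ∘ α1) :=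
      ⟨g ∘ f1, hf1.comp hg, by rw [Function.comp_assoc]⟩
    simp only [hχ, if_pos hP]
  have h2 : χ (g ∘ (f2 ∘ α2)) = 1 := by
    rw [← h1]
    exact hmono _ _ (hα2.comp hf2) (hα1.comp hf1)
  rw [hχ] at h2
  by_cases hx : ∃ β : B1.V → C.V, IsEmb B1 C β ∧ β ∘ α1 = g ∘ (f2 ∘ α2)
  · obtain ⟨β1, hβ1, hβeq⟩ := hx
    refine ⟨C, hC, β1, g ∘ f2, hβ1, hf2.comp hg, fun x => ?_⟩
    exact congrFun hβeq x
  · simp only [if_neg hx] at h2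
    exact absurd h2 (by decide)
end

section
/- Let U be a closure description and let B1, B2 be U-closed relational structures with A a common substructure of B1 and B2 that is U-closed. Then the free amalgamation of B1 and B2 over A is U-closed. -/
/-- A member of a closure description: a relation symbol `s` together with a
nonempty irreducible root structure on `Fin m`, `m ≤ ar s`. -/
structure CPair (L : Lang) where
  s : L.sym
  m : ℕ
  hm : m ≤ L.ar s
  hpos : 0 < m
  rrel : ∀ sym : L.sym, (Fin (L.ar sym) → Fin m) → Prop
  irr : ∀ i j : Fin m, i ≠ j →
    ∃ sym t, rrel sym t ∧ (∃ k, t k = i) ∧ (∃ k, t k = j)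

/-- `r` represents an embedding of the root of `p` into `A`. -/
def RootEmb {L : Lang} (p : CPair L) (A : Str L) (r : Fin p.m → A.V) : Prop :=
  Function.Injective r ∧
    ∀ (sym : L.sym) (t : Fin (L.ar sym) → Fin p.m), p.rrel sym t ↔ A.rel sym (r ∘ t)

/-- `A` is `U`-closed: for each `(Rᵁ, R) ∈ U`, the `Rᵁ`-out-degree of an
`|R|`-tuple is one iff the tuple represents an embedding of `R`, zero otherwise. -/
def IsUClosed {L : Lang} (U : Set (CPair L)) (A : Str L) : Prop :=
  ∀ p ∈ U, ∀ r : Fin p.m → A.V,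
    (RootEmb p A r →
      ∃! t : Fin (L.ar p.s) → A.V,
        A.rel p.s t ∧ ∀ i : Fin p.m, t (Fin.castLE p.hm i) = r i) ∧
    (¬ RootEmb p A r →
      ∀ t : Fin (L.ar p.s) → A.V,
        ¬ (A.rel p.s t ∧ ∀ i : Fin p.m, t (Fin.castLE p.hm i) = r i))

/-- The substructure of `A` induced on `X`. -/
def Substr {L : Lang} (A : Str L) (X : Set A.V) : Str L :=
  ⟨X, fun s t => A.rel s fun i => (t i : A.V)⟩

section Aux

variable {L : Lang}

/-- Restrict a tuple into a set. -/
def resT {C : Str L} {n : ℕ} (S : Set C.V) (t : Fin n → C.V) (h : ∀ i, t i ∈ S) :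
    Fin n → (Substr C S).V := fun i => ⟨t i, h i⟩

/-- The underlying vertex of a substructure vertex. -/
def unres {C : Str L} {S : Set C.V} (v : (Substr C S).V) : C.V := v.1

lemma rootEmb_substr {p : CPair L} {C : Str L} {S : Set C.V} {r : Fin p.m → C.V}
    (hr : ∀ i, r i ∈ S) :
    RootEmb p (Substr C S) (resT S r hr) ↔ RootEmb p C r := by
  constructor
  · rintro ⟨hinj, hiff⟩
    refine ⟨fun i j hij => hinj (Subtype.ext hij), fun sym t => ?_⟩
    exact hiff sym t
  · rintro ⟨hinj, hiff⟩
    refine ⟨fun i j hij => hinj (congrArg unres hij), fun sym t => ?_⟩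
    exact hiff sym t

/-- Positive part: if the root image lies in `B1`, the unique closure over `B1`
works in `C`. -/
lemma pos_part {U : Set (CPair L)} {C : Str L} {B1 B2 : Set C.V}
    (hfree : ∀ (s : L.sym) (t : Fin (L.ar s) → C.V),
      C.rel s t → (∀ i, t i ∈ B1) ∨ (∀ i, t i ∈ B2))
    (hB1 : IsUClosed U (Substr C B1))
    (hB2 : IsUClosed U (Substr C B2))
    (hA : IsUClosed U (Substr C (B1 ∩ B2)))
    (p : CPair L) (hp : p ∈ U) (r : Fin p.m → C.V)
    (hr1 : ∀ i, r i ∈ B1) (hre : RootEmb p C r) :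
    ∃! t : Fin (L.ar p.s) → C.V,
      C.rel p.s t ∧ ∀ i : Fin p.m, t (Fin.castLE p.hm i) = r i := by
  have hre1 : RootEmb p (Substr C B1) (resT B1 r hr1) := (rootEmb_substr hr1).mpr hre
  obtain ⟨t1, ⟨ht1rel, ht1ext⟩, ht1u⟩ := (hB1 p hp (resT B1 r hr1)).1 hre1
  refine ⟨fun i => unres (t1 i), ⟨ht1rel, fun i => congrArg unres (ht1ext i)⟩, ?_⟩
  rintro t ⟨htrel, htext⟩
  rcases hfree p.s t htrel with htB1 | htB2
  · have := ht1u (resT B1 t htB1) ⟨htrel, fun i => Subtype.ext (htext i)⟩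
    funext i
    exact congrArg unres (congrFun this i)
  · -- the root image lies in the intersection
    have hrA : ∀ i, r i ∈ B1 ∩ B2 := fun i =>
      ⟨hr1 i, by rw [← htext i]; exact htB2 _⟩
    have hreA : RootEmb p (Substr C (B1 ∩ B2)) (resT _ r hrA) := (rootEmb_substr hrA).mpr hre
    obtain ⟨tA, ⟨tArel, tAext⟩, _⟩ := (hA p hp (resT _ r hrA)).1 hreA
    have hr2 : ∀ i, r i ∈ B2 := fun i => (hrA i).2
    have hre2 : RootEmb p (Substr C B2) (resT B2 r hr2) := (rootEmb_substr hr2).mpr hre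
    obtain ⟨t2, ⟨ht2rel, ht2ext⟩, ht2u⟩ := (hB2 p hp (resT B2 r hr2)).1 hre2
    have htA2 : ∀ i, unres (tA i) ∈ B2 := fun i => (tA i).2.2
    have htA1 : ∀ i, unres (tA i) ∈ B1 := fun i => (tA i).2.1
    have tAval : ∀ i : Fin p.m, unres (tA (Fin.castLE p.hm i)) = r i :=
      fun i => congrArg unres (tAext i)
    have e1 := ht2u (resT B2 t htB2) ⟨htrel, fun i => Subtype.ext (htext i)⟩
    have e2 := ht2u (resT B2 (fun i => unres (tA i)) htA2)
      ⟨tArel, fun i => Subtype.ext (tAval i)⟩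
    have e3 := ht1u (resT B1 (fun i => unres (tA i)) htA1)
      ⟨tArel, fun i => Subtype.ext (tAval i)⟩
    funext i
    have h12 : t i = unres (tA i) := by
      have := congrFun (e1.trans e2.symm) i
      exact congrArg unres this
    have h31 : unres (tA i) = unres (t1 i) := by
      have := congrFun e3 i
      exact congrArg unres this
    exact h12.trans h31

/-- Negative part: no extension can exist inside a closed side if `r` is not a
root embedding. -/
lemma neg_part {U : Set (CPair L)} {C : Str L} {S : Set C.V}
    (hS : IsUClosed U (Substr C S))
    (p : CPair L) (hp : p ∈ U) (r : Fin p.m → C.V)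
    (hnre : ¬ RootEmb p C r) (t : Fin (L.ar p.s) → C.V)
    (htrel : C.rel p.s t) (htS : ∀ i, t i ∈ S)
    (htext : ∀ i : Fin p.m, t (Fin.castLE p.hm i) = r i) : False := by
  have hrS : ∀ i, r i ∈ S := fun i => by rw [← htext i]; exact htS _
  have hnreS : ¬ RootEmb p (Substr C S) (resT S r hrS) := fun h =>
    hnre ((rootEmb_substr hrS).mp h)
  exact (hS p hp (resT S r hrS)).2 hnreS (resT S t htS)
    ⟨htrel, fun i => Subtype.ext (htext i)⟩

end Aux

/-- A free amalgamation of `U`-closed structures `B1` and `B2` over a `U`-closed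
common substructure `A = B1 ∩ B2` is `U`-closed.  Here `C` is the amalgam:
its vertices are covered by `B1` and `B2`, and every relational tuple lies
entirely inside `B1` or entirely inside `B2` (freeness). -/
theorem stmt8 {L : Lang} (U : Set (CPair L)) (C : Str L) (B1 B2 : Set C.V)
    (hcover : B1 ∪ B2 = Set.univ)
    (hfree : ∀ (s : L.sym) (t : Fin (L.ar s) → C.V),
      C.rel s t → (∀ i, t i ∈ B1) ∨ (∀ i, t i ∈ B2))
    (hB1 : IsUClosed U (Substr C B1))
    (hB2 : IsUClosed U (Substr C B2))
    (hA : IsUClosed U (Substr C (B1 ∩ B2))) :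
    IsUClosed U C := by
  intro p hp r
  have hfree' : ∀ (s : L.sym) (t : Fin (L.ar s) → C.V),
      C.rel s t → (∀ i, t i ∈ B2) ∨ (∀ i, t i ∈ B1) := fun s t h => (hfree s t h).symm
  have hA' : IsUClosed U (Substr C (B2 ∩ B1)) := by rwa [Set.inter_comm]
  constructor
  · intro hre
    have side : (∀ i, r i ∈ B1) ∨ (∀ i, r i ∈ B2) := by
      by_contra h
      push_neg at h
      obtain ⟨⟨i, hi⟩, ⟨j, hj⟩⟩ := h
      have hij : i ≠ j := by
        rintro rfl
        have : r i ∈ B1 ∪ B2 := hcover ▸ Set.mem_univ _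
        rcases this with h | h
        · exact hi h
        · exact hj h
      obtain ⟨sym, tu, hrrel, ⟨k, hk⟩, ⟨k', hk'⟩⟩ := p.irr i j hij
      have hrel : C.rel sym (r ∘ tu) := (hre.2 sym tu).mp hrrel
      rcases hfree sym (r ∘ tu) hrel with h | h
      · exact hi (by simpa [hk] using h k)
      · exact hj (by simpa [hk'] using h k')
    rcases side with h1 | h2
    · exact pos_part hfree hB1 hB2 hA p hp r h1 hre
    · exact pos_part hfree' hB2 hB1 hA' p hp r h2 hre
  · rintro hnre t ⟨htrel, htext⟩
    rcases hfree p.s t htrel with hS | hS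
    · exact neg_part hB1 p hp r hnre t htrel hS htext
    · exact neg_part hB2 p hp r hnre t htrel hS htext
end

section
/- Let A be a connected relational structure, R a vertex cut of A, and A1, A2 connected substructures of A separated by R. Then there exists a minimal separating cut R' ⊆ R separating A1 and A2 in A. Moreover if the neighbourhood of A1 in A is contained in R, then R' can be chosen inside that neighbourhood. -/
/-- Reachability within a set `S` of vertices. -/
def ReachIn {V : Type} (G : SimpleGraph V) (S : Set V) (x y : V) : Prop :=
  Relation.ReflTransGen (fun a b => G.Adj a b ∧ a ∈ S ∧ b ∈ S) x y

/-- The neighbourhood of a set `S`. -/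
def nbhd {V : Type} (G : SimpleGraph V) (S : Set V) : Set V :=
  {v | v ∉ S ∧ ∃ u ∈ S, G.Adj u v}

/-- `C` is a connected component of `G` with the cut `R` removed. -/
def IsCompOf {V : Type} (G : SimpleGraph V) (R C : Set V) : Prop :=
  C.Nonempty ∧ C ⊆ Rᶜ ∧ ∃ x ∈ C, ∀ y, y ∈ C ↔ ReachIn G Rᶜ x y

/-- `R'` is a minimal separating cut for `A1` and `A2`:
there are distinct components `C1 ⊇ A1`, `C2 ⊇ A2` of the complement of `R'`
with `R' = N(C1) = N(C2)`. -/
def MinSepCut {V : Type} (G : SimpleGraph V) (R' A1 A2 : Set V) : Prop :=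
  ∃ C1 C2 : Set V, IsCompOf G R' C1 ∧ IsCompOf G R' C2 ∧
    A1 ⊆ C1 ∧ A2 ⊆ C2 ∧ C1 ≠ C2 ∧ R' = nbhd G C1 ∧ R' = nbhd G C2

namespace Stmt11Aux

variable {V : Type} {G : SimpleGraph V}

lemma reach_mono {S T : Set V} (h : S ⊆ T) {x y : V} (hr : ReachIn G S x y) :
    ReachIn G T x y :=
  Relation.ReflTransGen.mono (fun _ _ hab => ⟨hab.1, h hab.2.1, h hab.2.2⟩) _ _ hr

/-- Invariant lemma: if `P` is closed under steps inside `S`, reachability preserves `P`. -/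
lemma reach_stay {S P : Set V} {x y : V} (hx : x ∈ P)
    (hstep : ∀ a b, a ∈ P → G.Adj a b → a ∈ S → b ∈ S → b ∈ P)
    (hr : ReachIn G S x y) : y ∈ P := by
  induction hr with
  | refl => exact hx
  | tail _ h ih => exact hstep _ _ ih h.1 h.2.1 h.2.2

lemma reach_mem {S : Set V} {x y : V} (hx : x ∈ S) (hr : ReachIn G S x y) : y ∈ S :=
  reach_stay hx (fun _ b _ _ _ hb => hb) hr

lemma main (G : SimpleGraph V) (R A1 A2 : Set V)
    (h1R : A1 ⊆ Rᶜ) (h2R : A2 ⊆ Rᶜ)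
    (h1ne : A1.Nonempty) (h2ne : A2.Nonempty)
    (h1c : ∀ x ∈ A1, ∀ y ∈ A1, ReachIn G A1 x y)
    (h2c : ∀ x ∈ A2, ∀ y ∈ A2, ReachIn G A2 x y)
    (hsep : ∀ x ∈ A1, ∀ y ∈ A2, ¬ ReachIn G Rᶜ x y) :
    ∃ R', R' ⊆ R ∧ MinSepCut G R' A1 A2 := by
  obtain ⟨a1, ha1⟩ := h1ne
  obtain ⟨a2, ha2⟩ := h2ne
  -- C1 : component of a1 in G - R
  set C1 : Set V := {y | ReachIn G Rᶜ a1 y} with hC1def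
  have ha1C1 : a1 ∈ C1 := Relation.ReflTransGen.refl
  have hC1R : C1 ⊆ Rᶜ := fun y hy => reach_mem (h1R ha1) hy
  have hA1C1 : A1 ⊆ C1 := fun y hy => reach_mono h1R (h1c a1 ha1 y hy)
  -- R1 := nbhd C1 ⊆ R
  set R1 : Set V := nbhd G C1 with hR1def
  have hR1R : R1 ⊆ R := by
    rintro v ⟨hvC1, u, huC1, huv⟩
    by_contra hvR
    exact hvC1 (Relation.ReflTransGen.tail huC1 ⟨huv, hC1R huC1, hvR⟩)
  have hRc_R1c : Rᶜ ⊆ R1ᶜ := Set.compl_subset_compl.mpr hR1R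
  -- C2 : component of a2 in G - R1
  set C2 : Set V := {y | ReachIn G R1ᶜ a2 y} with hC2def
  have ha2C2 : a2 ∈ C2 := Relation.ReflTransGen.refl
  have hC2R1 : C2 ⊆ R1ᶜ := fun y hy => reach_mem (hRc_R1c (h2R ha2)) hy
  have hA2C2 : A2 ⊆ C2 := fun y hy =>
    reach_mono (fun z hz => hRc_R1c (h2R hz)) (h2c a2 ha2 y hy)
  -- C2 is disjoint from C1
  have hC2C1 : ∀ y ∈ C2, y ∉ C1 := by
    intro y hy
    refine reach_stay (P := C1ᶜ) ?_ ?_ hy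
    · exact fun h => hsep a1 ha1 a2 ha2 h
    · intro a b haC1 hab haR1 hbR1
      intro hbC1
      exact haR1 ⟨haC1, b, hbC1, hab.symm⟩
  -- R' := nbhd C2
  set R' : Set V := nbhd G C2 with hR'def
  have hR'R1 : R' ⊆ R1 := by
    rintro v ⟨hvC2, u, huC2, huv⟩
    by_contra hvR1
    exact hvC2 (Relation.ReflTransGen.tail huC2 ⟨huv, hC2R1 huC2, hvR1⟩)
  have hR'R : R' ⊆ R := fun v hv => hR1R (hR'R1 hv)
  have hR1c_R'c : R1ᶜ ⊆ R'ᶜ := Set.compl_subset_compl.mpr hR'R1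
  have hRc_R'c : Rᶜ ⊆ R'ᶜ := Set.compl_subset_compl.mpr hR'R
  have hC2R' : C2 ⊆ R'ᶜ := fun y hy => hR1c_R'c (hC2R1 hy)
  -- C2 is also the component of a2 w.r.t. R'
  have hC2comp : ∀ y, y ∈ C2 ↔ ReachIn G R'ᶜ a2 y := by
    intro y
    constructor
    · exact fun hy => reach_mono hR1c_R'c hy
    · intro hy
      refine reach_stay (P := C2) ha2C2 ?_ hy
      intro a b haC2 hab _ hbR'
      by_contra hbC2
      exact hbR' ⟨hbC2, a, haC2, hab⟩
  -- C1' : component of a1 w.r.t. R'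
  set C1' : Set V := {y | ReachIn G R'ᶜ a1 y} with hC1'def
  have ha1C1' : a1 ∈ C1' := Relation.ReflTransGen.refl
  have hC1'R' : C1' ⊆ R'ᶜ := fun y hy => reach_mem (hRc_R'c (h1R ha1)) hy
  have hC1C1' : C1 ⊆ C1' := fun y hy => reach_mono hRc_R'c hy
  have hA1C1' : A1 ⊆ C1' := fun y hy => hC1C1' (hA1C1 hy)
  -- C1' is disjoint from C2
  have hC1'C2 : ∀ y ∈ C1', y ∉ C2 := by
    intro y hy
    refine reach_stay (P := C2ᶜ) ?_ ?_ hy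
    · exact fun h => hC2C1 a1 h ha1C1
    · intro a b haC2 hab haR' hbR'
      intro hbC2
      exact haR' ⟨haC2, b, hbC2, hab.symm⟩
  have hne : C1' ≠ C2 := by
    intro h
    exact hC1'C2 a2 (h ▸ ha2C2) ha2C2
  -- R' = nbhd C1'
  have hR'C1' : R' = nbhd G C1' := by
    apply Set.eq_of_subset_of_subset
    · intro r hr
      obtain ⟨hrC1, u, huC1, hru⟩ := hR'R1 hr
      exact ⟨fun h => hC1'R' h hr, u, hC1C1' huC1, hru⟩
    · rintro v ⟨hvC1', u, huC1', huv⟩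
      by_contra hvR'
      exact hvC1' (Relation.ReflTransGen.tail huC1' ⟨huv, hC1'R' huC1', hvR'⟩)
  exact ⟨R', hR'R, C1', C2, ⟨⟨a1, ha1C1'⟩, hC1'R', a1, ha1C1', fun y => Iff.rfl⟩,
    ⟨⟨a2, ha2C2⟩, hC2R', a2, ha2C2, hC2comp⟩,
    hA1C1', hA2C2, hne, hR'C1', rfl⟩

end Stmt11Aux

theorem stmt11 {V : Type} (G : SimpleGraph V) (hconn : G.Connected)
    (R A1 A2 : Set V)
    (h1R : A1 ⊆ Rᶜ) (h2R : A2 ⊆ Rᶜ)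
    (h1ne : A1.Nonempty) (h2ne : A2.Nonempty)
    (h1c : ∀ x ∈ A1, ∀ y ∈ A1, ReachIn G A1 x y)
    (h2c : ∀ x ∈ A2, ∀ y ∈ A2, ReachIn G A2 x y)
    (hsep : ∀ x ∈ A1, ∀ y ∈ A2, ¬ ReachIn G Rᶜ x y) :
    (∃ R', R' ⊆ R ∧ MinSepCut G R' A1 A2) ∧
    (nbhd G A1 ⊆ R → ∃ R', R' ⊆ nbhd G A1 ∧ MinSepCut G R' A1 A2) := by
  constructor
  · exact Stmt11Aux.main G R A1 A2 h1R h2R h1ne h2ne h1c h2c hsep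
  · intro hN
    -- apply main with R := nbhd G A1
    have hA12 : ∀ y, y ∈ A1 → y ∉ A2 := by
      intro y hy hy2
      exact hsep y hy y hy2 Relation.ReflTransGen.refl
    refine Stmt11Aux.main G (nbhd G A1) A1 A2 ?_ ?_ h1ne h2ne h1c h2c ?_
    · exact fun v hv hv' => hv'.1 hv
    · intro v hv hv'
      exact h2R hv (hN hv')
    · intro x hx y hy hr
      have : y ∈ A1 := by
        refine Stmt11Aux.reach_stay (P := A1) hx ?_ hr
        intro a b ha hab _ hb
        by_contra hbA1
        exact hb ⟨hbA1, a, ha, hab⟩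
      exact hA12 y this hy
end

section
/- Hales–Jewett based product Ramsey statement: Let B be a finite A-partite system over a finite structure A, and let Σ enumerate the copies of A in B. For N sufficiently large (the Hales–Jewett number for alphabet Σ and 2 colours), the N-fold 'functional power' C of B — with parts X^i_C the functions {1,...,N} → X^i_B and a tuple of functions in a relation iff it is coordinatewise in the corresponding relation of B — satisfies: for every 2-colouring of the copies of A in C there is a copy of B in C, induced by a combinatorial line, all of whose copies of A are monochromatic. -/
def Irred {L : Lang} (A : Str L) : Prop :=
  ∀ x y : A.V, x ≠ y → ∃ s t, A.rel s t ∧ (∃ i, t i = x) ∧ (∃ j, t j = y)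

def IsHomEmb {L : Lang} (A B : Str L) (f : A.V → B.V) : Prop :=
  (∀ (s : L.sym) (t : Fin (L.ar s) → A.V), A.rel s t → B.rel s (f ∘ t)) ∧
  ∀ X : Set A.V, Irred (Substr A X) →
    Set.InjOn f X ∧ ∀ (s : L.sym) (t : Fin (L.ar s) → X),
      A.rel s (fun i => (t i : A.V)) ↔ B.rel s (fun i => f (t i))

open Combinatorics in
lemma line_fin_aux (α κ : Type*) [Finite α] [Finite κ] :
    ∃ n, ∀ C : (Fin n → α) → κ, ∃ l : Line α (Fin n), l.IsMono C := by
  obtain ⟨ι, ιfin, hι⟩ := Line.exists_mono_in_high_dimension α κ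
  refine ⟨Fintype.card ι, fun C ↦ ?_⟩
  obtain ⟨l, c, cl⟩ := hι fun v ↦ C (v ∘ (Fintype.equivFin _).symm)
  refine ⟨⟨l.idxFun ∘ (Fintype.equivFin _).symm, ?_⟩, c, fun x => cl x⟩
  obtain ⟨i, hi⟩ := l.proper
  exact ⟨Fintype.equivFin _ i, by simpa using hi⟩

/-- Hales–Jewett based product Ramsey statement for `A`-partite systems:
`B` is an `A`-partite system with projection `π`; for `N` large enough, the
`N`-fold functional power `C` of `B` (vertices of part `p` are functions
`Fin N → B.V` constant in part, relations taken coordinatewise) has the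
property that every `2`-colouring of the copies of `A` in `C` admits a copy of
`B` induced by a combinatorial line `(ω, h)` all of whose copies of `A` are
monochromatic. -/
theorem stmt13 {L : Lang} (A B : Str L) (hA : Finite A.V) (hB : Finite B.V)
    (π : B.V → A.V)
    (hπ : IsHomEmb B A π)
    (htrans : ∀ (s : L.sym) (t : Fin (L.ar s) → B.V), B.rel s t →
      ∀ i j, π (t i) = π (t j) → t i = t j)
    (hcopies : Nonempty {e : A.V → B.V // IsEmb A B e ∧ ∀ x, π (e x) = x}) :
    ∃ N : ℕ, 0 < N ∧
      ∀ χ : (A.V → {f : Fin N → B.V // ∀ n m, π (f n) = π (f m)}) → Bool,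
        ∃ (ω : Finset (Fin N)) (_ : ω.Nonempty)
          (h : Fin N → {e : A.V → B.V // IsEmb A B e ∧ ∀ x, π (e x) = x})
          (eL : B.V → {f : Fin N → B.V // ∀ n m, π (f n) = π (f m)}),
          (∀ v i, (eL v).1 i = if i ∈ ω then v else (h i).1 (π v)) ∧
          IsEmb B
            (⟨{f : Fin N → B.V // ∀ n m, π (f n) = π (f m)},
              fun s t => ∀ n, B.rel s fun i => (t i).1 n⟩ : Str L) eL ∧
          ∀ e e' : {e : A.V → B.V // IsEmb A B e ∧ ∀ x, π (e x) = x},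
            χ (fun x => eL (e.1 x)) = χ (fun x => eL (e'.1 x)) := by
  classical
  obtain ⟨e₀⟩ := hcopies
  have : Finite A.V := hA
  have : Finite B.V := hB
  set Sig := {e : A.V → B.V // IsEmb A B e ∧ ∀ x, π (e x) = x} with hSig
  have hfin : Finite Sig := Subtype.finite
  obtain ⟨N, hN⟩ := line_fin_aux Sig Bool
  have hNpos : 0 < N := by
    obtain ⟨l, _⟩ := hN (fun _ => true)
    obtain ⟨i, _⟩ := l.proper
    exact i.pos
  refine ⟨N, hNpos, ?_⟩
  intro χ
  set C' : (Fin N → Sig) → Bool := fun g =>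
    χ (fun x => ⟨fun i => (g i).1 x, fun n m => by rw [(g n).2.2, (g m).2.2]⟩) with hC'
  obtain ⟨l, c, hl⟩ := hN C'
  set ω : Finset (Fin N) := Finset.univ.filter (fun i => l.idxFun i = none) with hω
  have hωmem : ∀ i, i ∈ ω ↔ l.idxFun i = none := by
    intro i; simp [hω]
  have hωne : ω.Nonempty := by
    obtain ⟨i, hi⟩ := l.proper
    exact ⟨i, (hωmem i).2 hi⟩
  set h : Fin N → Sig := fun i => (l.idxFun i).getD e₀ with hh
  have hπconst : ∀ v i, π (if i ∈ ω then v else (h i).1 (π v)) = π v := by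
    intro v i
    split
    · rfl
    · exact (h i).2.2 (π v)
  set eL : B.V → {f : Fin N → B.V // ∀ n m, π (f n) = π (f m)} := fun v =>
    ⟨fun i => if i ∈ ω then v else (h i).1 (π v),
     fun n m => by rw [hπconst, hπconst]⟩ with heL
  refine ⟨ω, hωne, h, eL, fun v i => rfl, ?_, ?_⟩
  · constructor
    · intro v w hvw
      obtain ⟨i, hi⟩ := hωne
      have := congrArg (fun f => f.1 i) hvw
      simpa [heL, hi] using this
    · intro s t
      constructor
      · intro hrel n
        by_cases hn : n ∈ ω
        · simpa [heL, hn] using hrel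
        · have hA' : A.rel s (π ∘ t) := hπ.1 s t hrel
          have := ((h n).2.1.2 s (π ∘ t)).1 hA'
          simpa [heL, hn, Function.comp_def] using this
      · intro hrel
        obtain ⟨i, hi⟩ := hωne
        have := hrel i
        simpa [heL, hi] using this
  · intro e e'
    have key : ∀ e : Sig, χ (fun x => eL (e.1 x)) = C' (l e) := by
      intro e
      have : (fun x => eL (e.1 x)) =
          (fun x => (⟨fun i => ((l e : Fin N → Sig) i).1 x,
            fun n m => by rw [((l e : Fin N → Sig) n).2.2, ((l e : Fin N → Sig) m).2.2]⟩ :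
            {f : Fin N → B.V // ∀ n m, π (f n) = π (f m)})) := by
        funext x
        apply Subtype.ext
        funext i
        show (if i ∈ ω then e.1 x else (h i).1 (π (e.1 x))) = ((l e : Fin N → Sig) i).1 x
        rcases hcase : l.idxFun i with _ | a
        · have hi : i ∈ ω := (hωmem i).2 hcase
          simp [hi, Combinatorics.Line.coe_apply, hcase]
        · have hi : i ∉ ω := by simp [hωmem, hcase]
          simp only [hi, if_false, Combinatorics.Line.coe_apply, hcase, Option.getD_some]
          rw [e.2.2 x]
          show ((l.idxFun i).getD e₀).1 x = a.1 x
          rw [hcase]; rfl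
      rw [this]
    rw [key e, key e', hl e, hl e']
end

section
/- Let C be a finite structure in the language with two binary relations ≤ and ⪯ that admits a homomorphism-embedding into some finite ordered acyclic structure. Then C has a strong completion to a finite partial order with linear extension (⪯ a partial order, ≤ a linear order extending it) if and only if C contains no substructure on at most two vertices without such a completion and no quasi-cycle as a (not necessarily induced) substructure. -/
lemma chain_truncate {α : Type*} {r : α → α → Prop} :
    ∀ (l : List α) (a b : α), List.Chain r a l → b ∈ a :: l →
      ∃ l' : List α, List.Chain r b l' ∧
        (b :: l').getLast (by simp) = (a :: l).getLast (by simp) ∧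
        ((a :: l).Nodup → (b :: l').Nodup)
  | [], a, b, _, hb => by
      simp only [List.mem_singleton] at hb
      subst hb; exact ⟨[], .nil, rfl, fun h => h⟩
  | c :: l, a, b, hch, hb => by
      rcases List.mem_cons.mp hb with rfl | hb
      · exact ⟨c :: l, hch, rfl, fun h => h⟩
      · obtain ⟨l', h1, h2, h3⟩ := chain_truncate l c b (List.chain_cons.mp hch).2 hb
        refine ⟨l', h1, ?_, fun hnd => h3 hnd.of_cons⟩
        rw [h2, List.getLast_cons (List.cons_ne_nil c l)]

lemma rtg_nodup_chain {α : Type*} {r : α → α → Prop} {x y : α}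
    (h : Relation.ReflTransGen r x y) :
    ∃ l : List α, List.Chain r x l ∧ (x :: l).getLast (by simp) = y ∧ (x :: l).Nodup := by
  induction h using Relation.ReflTransGen.head_induction_on with
  | refl => exact ⟨[], .nil, rfl, by simp⟩
  | @head a c hac _ ih =>
    obtain ⟨l, hch, hlast, hnd⟩ := ih
    by_cases hx : a ∈ c :: l
    · obtain ⟨l', h1, h2, h3⟩ := chain_truncate l c a hch hx
      exact ⟨l', h1, h2.trans hlast, h3 hnd⟩
    · exact ⟨c :: l, List.chain_cons.mpr ⟨hac, hch⟩,
        by rw [List.getLast_cons (List.cons_ne_nil c l)]; exact hlast,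
        List.nodup_cons.mpr ⟨hx, hnd⟩⟩

/-- A structure with two binary relations `le` (for ≤) and `pre` (for ⪯). -/
structure TwoRel where
  V : Type
  le : V → V → Prop
  pre : V → V → Prop

/-- The substructure induced on `X`. -/
def SubT (A : TwoRel) (X : Set A.V) : TwoRel :=
  ⟨X, fun x y => A.le x y, fun x y => A.pre x y⟩

/-- `X` induces an irreducible substructure of `A`: every pair of distinct
vertices of `X` lies in a common relational tuple. -/
def TIrred (A : TwoRel) (X : Set A.V) : Prop :=
  ∀ x ∈ X, ∀ y ∈ X, x ≠ y → A.le x y ∨ A.le y x ∨ A.pre x y ∨ A.pre y x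

/-- A homomorphism-embedding between two-relational structures. -/
def THomEmb (A B : TwoRel) (f : A.V → B.V) : Prop :=
  (∀ x y, A.le x y → B.le (f x) (f y)) ∧
  (∀ x y, A.pre x y → B.pre (f x) (f y)) ∧
  ∀ X : Set A.V, TIrred A X → Set.InjOn f X ∧
    ∀ x ∈ X, ∀ y ∈ X,
      (A.le x y ↔ B.le (f x) (f y)) ∧ (A.pre x y ↔ B.pre (f x) (f y))

/-- `le` is a linear order. -/
def LeLinOrd (A : TwoRel) : Prop :=
  (∀ x, A.le x x) ∧ (∀ x y, A.le x y → A.le y x → x = y) ∧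
  (∀ x y z, A.le x y → A.le y z → A.le x z) ∧ (∀ x y, A.le x y ∨ A.le y x)

/-- An ordered acyclic structure: `le` is a linear order and `pre` is
compatible with it (every `pre`-edge between distinct vertices follows `le`,
so no directed cycle violates `le`). -/
def OrderedAcyclic (A : TwoRel) : Prop :=
  LeLinOrd A ∧ ∀ x y, x ≠ y → A.pre x y → A.le x y

/-- A partial order with linear extension: `pre` is a partial order and `le`
is a linear order extending it. -/
def POLE (A : TwoRel) : Prop :=
  LeLinOrd A ∧ (∀ x, A.pre x x) ∧ (∀ x y, A.pre x y → A.pre y x → x = y) ∧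
  (∀ x y z, A.pre x y → A.pre y z → A.pre x z) ∧ (∀ x y, A.pre x y → A.le x y)

/-- `C` has a strong completion to a finite partial order with linear
extension. -/
def StrongCompletionPOLE (C : TwoRel) : Prop :=
  ∃ D : TwoRel, Finite D.V ∧ POLE D ∧
    ∃ f : C.V → D.V, THomEmb C D f ∧ Function.Injective f

/-- A quasi-cycle on `n + 2` vertices as a (not necessarily induced)
substructure. -/
def QuasiCycleOn (C : TwoRel) (n : ℕ) (u : Fin (n + 2) → C.V) : Prop :=
  Function.Injective u ∧
  C.le (u 0) (u (Fin.last (n + 1))) ∧ ¬ C.pre (u 0) (u (Fin.last (n + 1))) ∧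
  ∀ i : Fin (n + 1), C.le (u i.castSucc) (u i.succ) ∧ C.pre (u i.castSucc) (u i.succ)

def HasQuasiCycle (C : TwoRel) : Prop :=
  ∃ (n : ℕ) (u : Fin (n + 2) → C.V), QuasiCycleOn C n u

theorem stmt14 (C : TwoRel) (hfin : Finite C.V)
    (h0 : ∃ C0 : TwoRel, Finite C0.V ∧ OrderedAcyclic C0 ∧
      ∃ f : C.V → C0.V, THomEmb C C0 f) :
    StrongCompletionPOLE C ↔
      ((∀ X : Set C.V, X.ncard ≤ 2 → StrongCompletionPOLE (SubT C X)) ∧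
        ¬ HasQuasiCycle C) := by
  obtain ⟨C0, hC0fin, hC0, f, hfle, hfpre, hf3⟩ := h0
  obtain ⟨⟨hle0refl, hle0antisym, hle0trans, hle0total⟩, hC0compat⟩ := hC0
  have hpairirr : ∀ {x y : C.V}, (C.le x y ∨ C.le y x ∨ C.pre x y ∨ C.pre y x) →
      TIrred C {x, y} := by
    intro x y hr a ha b hb hne
    simp only [Set.mem_insert_iff, Set.mem_singleton_iff] at ha hb
    rcases ha with rfl | rfl <;> rcases hb with rfl | rfl <;> tauto
  have hpairinfo : ∀ {x y : C.V}, x ≠ y →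
      (C.le x y ∨ C.le y x ∨ C.pre x y ∨ C.pre y x) →
      f x ≠ f y ∧ (C.le x y ↔ C0.le (f x) (f y)) ∧ (C.pre x y ↔ C0.pre (f x) (f y)) := by
    intro x y hne hr
    obtain ⟨hinj, hiff⟩ := hf3 {x, y} (hpairirr hr)
    refine ⟨fun h => hne (hinj (by simp) (by simp) h), ?_, ?_⟩
    · exact (hiff x (by simp) y (by simp)).1
    · exact (hiff x (by simp) y (by simp)).2
  constructor
  · ---- forward direction
    rintro ⟨D, hDfin, hD, F, hF, hFinj⟩
    constructor
    · intro X _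
      refine ⟨D, hDfin, hD, fun a => F a.val, ⟨fun a b h => hF.1 _ _ h,
        fun a b h => hF.2.1 _ _ h, ?_⟩, fun a b h => Subtype.ext (hFinj h)⟩
      intro Y hY
      have hY' : TIrred C (Subtype.val '' Y) := by
        rintro a ⟨a', ha', rfl⟩ b ⟨b', hb', rfl⟩ hne
        exact hY a' ha' b' hb' (fun h => hne (congrArg Subtype.val h))
      obtain ⟨hinj, hiff⟩ := hF.2.2 _ hY'
      refine ⟨fun a ha b hb h => Subtype.ext (hinj ⟨a, ha, rfl⟩ ⟨b, hb, rfl⟩ h), ?_⟩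
      intro a ha b hb
      exact hiff a.val ⟨a, ha, rfl⟩ b.val ⟨b, hb, rfl⟩
    · rintro ⟨n, u, huinj, hule, hunpre, hustep⟩
      have h2 : D.pre (F (u 0)) (F (u (Fin.last (n + 1)))) := by
        have key : ∀ i : Fin (n + 2), D.pre (F (u 0)) (F (u i)) := by
          intro i
          induction i using Fin.induction with
          | zero => exact hD.2.1 _
          | succ i ih => exact hD.2.2.2.1 _ _ _ ih (hF.2.1 _ _ (hustep i).2)
        exact key _
      have hne : u 0 ≠ u (Fin.last (n + 1)) := by
        intro h
        have := huinj h
        simp [Fin.ext_iff] at this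
      have hirr : TIrred C {u 0, u (Fin.last (n + 1))} := by
        intro a ha b hb hab
        simp only [Set.mem_insert_iff, Set.mem_singleton_iff] at ha hb
        rcases ha with rfl | rfl <;> rcases hb with rfl | rfl <;> tauto
      have := (hF.2.2 _ hirr).2 (u 0) (by simp) (u (Fin.last (n + 1))) (by simp)
      exact hunpre (this.2.mpr h2)
  · ---- backward direction
    rintro ⟨h2, hnq⟩
    -- reflexivity of both relations in C
    have hrefl : ∀ x : C.V, C.le x x ∧ C.pre x x := by
      intro x
      obtain ⟨D, _, hD, g, hg, _⟩ := h2 {x} (by simp)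
      have hirr : TIrred (SubT C {x}) Set.univ := by
        intro a _ b _ hne
        exact absurd (Subtype.ext ((Set.mem_singleton_iff.mp a.2).trans
          (Set.mem_singleton_iff.mp b.2).symm)) hne
      have := (hg.2.2 Set.univ hirr).2 ⟨x, rfl⟩ trivial ⟨x, rfl⟩ trivial
      exact ⟨this.1.mpr (hD.1.1 _), this.2.mpr (hD.2.1 _)⟩
    -- strict order on C0
    set lt0 : C0.V → C0.V → Prop := fun a b => C0.le a b ∧ a ≠ b with hlt0def
    have lt0_trans : ∀ {a b c}, lt0 a b → lt0 b c → lt0 a c := by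
      rintro a b c ⟨h1, h2⟩ ⟨h3, _⟩
      refine ⟨hle0trans _ _ _ h1 h3, fun he => ?_⟩
      subst he
      exact h2 (hle0antisym _ _ h1 h3)
    have lt0_asymm : ∀ {a b}, lt0 a b → lt0 b a → False := by
      rintro a b ⟨h1, h2⟩ ⟨h3, _⟩
      exact h2 (hle0antisym _ _ h1 h3)
    have step_lt0 : ∀ {a b : C.V}, C.pre a b → a ≠ b → lt0 (f a) (f b) ∧ C.le a b := by
      intro a b hpre hne
      obtain ⟨hfne, hle_iff, hpre_iff⟩ := hpairinfo hne (Or.inr (Or.inr (Or.inl hpre)))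
      have h0le : C0.le (f a) (f b) := hC0compat _ _ hfne (hpre_iff.mp hpre)
      exact ⟨⟨h0le, hfne⟩, hle_iff.mpr h0le⟩
    set Dpre : C.V → C.V → Prop := Relation.ReflTransGen C.pre with hDpredef
    have Dpre_lt0 : ∀ {a b : C.V}, Dpre a b → a = b ∨ lt0 (f a) (f b) := by
      intro a b h
      induction h with
      | refl => exact Or.inl rfl
      | @tail b c _ hbc ih =>
        by_cases hbceq : b = c
        · subst hbceq; exact ih
        · rcases ih with rfl | ih
          · exact Or.inr (step_lt0 hbc hbceq).1
          · exact Or.inr (lt0_trans ih (step_lt0 hbc hbceq).1)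
    -- quasi-cycle construction
    have rtg_ne : ∀ {a b : C.V}, Relation.ReflTransGen C.pre a b →
        Relation.ReflTransGen (fun u v => C.pre u v ∧ u ≠ v) a b := by
      intro a b h
      induction h with
      | refl => exact .refl
      | @tail b c _ hbc ih =>
        by_cases hbceq : b = c
        · subst hbceq; exact ih
        · exact ih.tail ⟨hbc, hbceq⟩
    have hqc : ∀ {x y : C.V}, x ≠ y → C.le x y → ¬ C.pre x y → Dpre x y → False := by
      intro x y hne hle hnpre hD
      obtain ⟨l, hch, hlast, hnd⟩ := rtg_nodup_chain (rtg_ne hD)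
      obtain ⟨m, hm⟩ : ∃ m, l.length = m + 1 := by
        cases l with
        | nil => exact absurd hlast hne
        | cons c l => exact ⟨l.length, rfl⟩
      have hlen : (x :: l).length = m + 2 := by simp [hm]
      set u : Fin (m + 2) → C.V := fun i => (x :: l).get (Fin.cast hlen.symm i) with hu
      have hu0 : u 0 = x := rfl
      have hul : u (Fin.last (m + 1)) = y := by
        have hcast : Fin.cast hlen.symm (Fin.last (m + 1)) =
            ⟨(x :: l).length - 1, by simp [hlen]⟩ := Fin.ext (by simp [hlen, hm])
        show (x :: l).get (Fin.cast hlen.symm (Fin.last (m + 1))) = y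
        rw [hcast, List.get_length_sub_one]
        exact hlast
      refine hnq ⟨m, u, ?_, ?_, ?_, ?_⟩
      · intro i j hij
        have h1 : Fin.cast hlen.symm i = Fin.cast hlen.symm j :=
          List.nodup_iff_injective_get.mp hnd hij
        have h2 : (Fin.cast hlen.symm i).val = (Fin.cast hlen.symm j).val :=
          congrArg Fin.val h1
        exact Fin.ext h2
      · rw [hu0, hul]; exact hle
      · rw [hu0, hul]; exact hnpre
      · intro i
        have hch' : List.Chain' (fun u v => C.pre u v ∧ u ≠ v) (x :: l) := hch
        have hstep := List.isChain_iff_getElem.mp hch' i.val (by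
          simp only [hlen]
          omega)
        exact ⟨(step_lt0 hstep.1 hstep.2).2, hstep.1⟩
    -- tie-breaking injection
    obtain ⟨N, ⟨e⟩⟩ := Finite.exists_equiv_fin C.V
    set g : C.V → ℕ := fun v => (e v : ℕ) with hgdef
    have ginj : Function.Injective g := fun a b h => e.injective (Fin.ext h)
    set Dle : C.V → C.V → Prop :=
      fun a b => lt0 (f a) (f b) ∨ (f a = f b ∧ g a ≤ g b) with hDledef
    have Dle_refl : ∀ x, Dle x x := fun x => Or.inr ⟨rfl, le_refl _⟩
    refine ⟨⟨C.V, Dle, Dpre⟩, hfin, ⟨⟨Dle_refl, ?_, ?_, ?_⟩, ?_, ?_, ?_, ?_⟩,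
      id, ⟨?_, ?_, ?_⟩, fun a b h => h⟩
    · -- le antisymm
      rintro x y (⟨h1, h2⟩ | ⟨h1, h2⟩) (⟨h3, h4⟩ | ⟨h3, h4⟩)
      · exact absurd (hle0antisym _ _ h1 h3) h2
      · exact absurd h3.symm h2
      · exact absurd h1.symm h4
      · exact ginj (Nat.le_antisymm h2 h4)
    · -- le trans
      rintro x y z (h1 | ⟨h1, h2⟩) (h3 | ⟨h3, h4⟩)
      · exact Or.inl (lt0_trans h1 h3)
      · exact Or.inl (h3 ▸ h1)
      · refine Or.inl (h1 ▸ h3)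
      · exact Or.inr ⟨h1.trans h3, h2.trans h4⟩
    · -- le total
      intro x y
      by_cases hfe : f x = f y
      · rcases Nat.le_total (g x) (g y) with h | h
        · exact Or.inl (Or.inr ⟨hfe, h⟩)
        · exact Or.inr (Or.inr ⟨hfe.symm, h⟩)
      · rcases hle0total (f x) (f y) with h | h
        · exact Or.inl (Or.inl ⟨h, hfe⟩)
        · exact Or.inr (Or.inl ⟨h, Ne.symm hfe⟩)
    · -- pre refl
      exact fun x => Relation.ReflTransGen.refl
    · -- pre antisymm
      intro x y h h'
      rcases Dpre_lt0 h with rfl | h1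
      · rfl
      · rcases Dpre_lt0 h' with rfl | h2
        · rfl
        · exact absurd h2 (fun h2 => lt0_asymm h1 h2)
    · -- pre trans
      exact fun x y z h h' => h.trans h'
    · -- pre → le
      intro x y h
      rcases Dpre_lt0 h with rfl | h1
      · exact Dle_refl x
      · exact Or.inl h1
    · -- hom: le
      intro x y h
      by_cases hxy : x = y
      · subst hxy; exact Dle_refl x
      · obtain ⟨hfne, hle_iff, _⟩ := hpairinfo hxy (Or.inl h)
        exact Or.inl ⟨hle_iff.mp h, hfne⟩
    · -- hom: pre
      exact fun x y h => Relation.ReflTransGen.single h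
    · -- irreducible substructures
      intro X hX
      refine ⟨Function.injective_id.injOn, ?_⟩
      intro x hx y hy
      by_cases hxy : x = y
      · subst hxy
        exact ⟨iff_of_true (hrefl x).1 (Dle_refl x),
          iff_of_true (hrefl x).2 Relation.ReflTransGen.refl⟩
      · have hr := hX x hx y hy hxy
        obtain ⟨hfne, hle_iff, hpre_iff⟩ := hpairinfo hxy hr
        constructor
        · constructor
          · intro h
            exact Or.inl ⟨hle_iff.mp h, hfne⟩
          · rintro (⟨h1, _⟩ | ⟨heq, _⟩)
            · exact hle_iff.mpr h1
            · exact absurd heq hfne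
        · constructor
          · exact fun h => Relation.ReflTransGen.single h
          · intro hDp
            by_contra hnpre
            have hlt : lt0 (f x) (f y) := (Dpre_lt0 hDp).resolve_left hxy
            rcases hr with hle | hle' | hpre' | hpre'
            · exact hqc hxy hle hnpre hDp
            · have h0 : C0.le (f y) (f x) :=
                ((hpairinfo (Ne.symm hxy) (Or.inl hle')).2.1).mp hle'
              exact lt0_asymm hlt ⟨h0, Ne.symm hfne⟩
            · exact hnpre hpre'
            · exact lt0_asymm hlt (step_lt0 hpre' (Ne.symm hxy)).1
end

section
/- In any quasi-cycle-free completion argument for partial orders: the class of finite partial orders with linear extension is a locally finite subclass of the class of finite ordered acyclic digraphs; explicitly, for every finite acyclic structure C₀ on c vertices, every structure C admitting a homomorphism-embedding to C₀ and containing a quasi-cycle must contain a quasi-cycle on at most c vertices. -/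
/-- Local finiteness of partial orders with linear extension inside ordered
acyclic structures: if `C` homomorphism-embeds into a finite ordered acyclic
structure `C0` and `C` contains a quasi-cycle, then `C` contains a quasi-cycle
on at most `|C0|` vertices. -/
theorem stmt15 (C0 : TwoRel) (hfin0 : Finite C0.V) (hC0 : OrderedAcyclic C0)
    (C : TwoRel) (f : C.V → C0.V) (hf : THomEmb C C0 f)
    (hqc : ∃ (n : ℕ) (u : Fin (n + 2) → C.V), QuasiCycleOn C n u) :
    ∃ (n : ℕ) (u : Fin (n + 2) → C.V),
      QuasiCycleOn C n u ∧ n + 2 ≤ Nat.card C0.V := by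
  obtain ⟨n, u, hu⟩ := hqc
  refine ⟨n, u, hu, ?_⟩
  obtain ⟨huinj, hle0n, hpre0n, hstep⟩ := hu
  obtain ⟨⟨hrefl, hantisym, htrans, _⟩, _⟩ := hC0
  set g : Fin (n + 2) → C0.V := fun i => f (u i) with hg
  -- consecutive steps in C0
  have gstep : ∀ i : Fin (n + 1), C0.le (g i.castSucc) (g i.succ) := fun i =>
    hf.1 _ _ (hstep i).1
  -- monotone chain
  have mono : ∀ j i : Fin (n + 2), i ≤ j → C0.le (g i) (g j) := by
    intro j
    induction j using Fin.induction with
    | zero =>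
      intro i hi
      have : i = 0 := le_antisymm hi (Fin.zero_le i)
      rw [this]; exact hrefl _
    | succ k ih =>
      intro i hi
      rcases eq_or_lt_of_le hi with h | h
      · rw [h]; exact hrefl _
      · have : i ≤ k.castSucc := Fin.le_castSucc_iff.mpr h
        exact htrans _ _ _ (ih i this) (gstep k)
  -- consecutive images are distinct, via irreducibility of edge pairs
  have gne : ∀ k : Fin (n + 1), g k.castSucc ≠ g k.succ := by
    intro k
    have hirr : TIrred C {u k.castSucc, u k.succ} := by
      intro x hx y hy hxy
      rcases hx with rfl | rfl <;> rcases hy with rfl | rfl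
      · exact absurd rfl hxy
      · exact Or.inl (hstep k).1
      · exact Or.inr (Or.inl (hstep k).1)
      · exact absurd rfl hxy
    have hinjOn := (hf.2.2 _ hirr).1
    intro h
    have : u k.castSucc = u k.succ :=
      hinjOn (Set.mem_insert _ _) (Set.mem_insert_of_mem _ rfl) h
    exact absurd (huinj this) (Fin.castSucc_lt_succ : k.castSucc < k.succ).ne
  -- f ∘ u is injective
  have key : ∀ i j : Fin (n + 2), i < j → g i = g j → False := by
    intro i j hlt hij
    -- i < j ≤ last, so i = k.castSucc for some k
    have hi_lt : (i : ℕ) < n + 1 := by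
      have := j.isLt; omega
    set k : Fin (n + 1) := ⟨i, hi_lt⟩ with hk
    have hkc : k.castSucc = i := by simp [hk, Fin.ext_iff]
    have h1 : C0.le (g k.succ) (g j) := by
      apply mono
      simp [hk, Fin.le_def, Fin.succ]
      omega
    have h2 : C0.le (g i) (g k.succ) := by rw [← hkc]; exact gstep k
    have h3 : C0.le (g k.succ) (g i) := by rw [hij]; exact h1
    have : g i = g k.succ := hantisym _ _ h2 h3
    rw [← hkc] at this
    exact gne k this
  have ginj : Function.Injective g := by
    intro i j hij
    rcases lt_trichotomy i j with h | h | h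
    · exact absurd hij (False.elim (key i j h hij))
    · exact h
    · exact absurd hij (False.elim (key j i h hij.symm))
  calc n + 2 = Nat.card (Fin (n + 2)) := by simp
    _ ≤ Nat.card C0.V := Nat.card_le_card_of_injective g ginj
end

section
/- Let l ≥ 5 be odd, and let B1, B2 be finite graphs with no homomorphic image of the l-cycle C_l, sharing a common induced subgraph A such that the truncated graph distances (distances capped at (l+1)/2) between vertices of A agree in B1 and B2. Then the free amalgamation G of B1 and B2 over A contains no homomorphic image of any odd cycle of length at most l. -/
namespace Stmt16Aux
open SimpleGraph Walk

variable {V : Type} {G : SimpleGraph V}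

open Classical in
/-- count of darts satisfying `Q` in a list -/
noncomputable def dc (Q : G.Dart → Prop) (L : List G.Dart) : ℕ :=
  L.countP (fun d => decide (Q d))

lemma dc_append (Q : G.Dart → Prop) (L1 L2 : List G.Dart) :
    dc Q (L1 ++ L2) = dc Q L1 + dc Q L2 := List.countP_append

open Classical in
lemma dc_eq_length (Q : G.Dart → Prop) (L : List G.Dart) (h : ∀ d ∈ L, Q d) :
    dc Q L = L.length := by
  unfold dc
  rw [List.countP_eq_length]
  intro d hd; simpa using h d hd

open Classical in
lemma dc_eq_zero (Q : G.Dart → Prop) (L : List G.Dart) (h : ∀ d ∈ L, ¬ Q d) :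
    dc Q L = 0 := by
  unfold dc
  rw [List.countP_eq_zero]
  intro d hd; simpa using h d hd

lemma head?_fst : ∀ {x y : V} (w : G.Walk x y) {d : G.Dart},
    w.darts.head? = some d → d.fst = x := by
  intro x y w d h
  cases w with
  | nil => simp [Walk.darts_nil] at h
  | cons hadj p =>
    rw [Walk.darts_cons] at h
    simp at h
    rw [← h]

lemma getLast?_snd : ∀ {x y : V} (w : G.Walk x y) {d : G.Dart},
    w.darts.getLast? = some d → d.snd = y := by
  intro x y w
  induction w with
  | nil => intro d h; simp [Walk.darts_nil] at h
  | @cons a b c hadj p ih =>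
    intro d h
    rw [Walk.darts_cons] at h
    rcases hp : p.darts with _ | ⟨e, L⟩
    · have hb : b = c := by
        apply Walk.eq_of_length_eq_zero
        have := p.length_darts
        rw [hp] at this
        simpa using this.symm
      rw [hp] at h
      simp at h
      rw [← h]
      exact hb
    · rw [hp, List.getLast?_cons_cons] at h
      exact ih (by rw [hp]; exact h)

/-- lift a walk whose darts stay in `B` to the induced subgraph -/
lemma lift_walk {B : Set V} : ∀ {x y : V} (w : G.Walk x y)
    (_ : ∀ d ∈ w.darts, d.fst ∈ B ∧ d.snd ∈ B) (hx : x ∈ B) (hy : y ∈ B),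
    ∃ w' : (G.induce B).Walk ⟨x, hx⟩ ⟨y, hy⟩, w'.length = w.length := by
  intro x y w
  induction w with
  | nil => intro _ hx hy; exact ⟨Walk.nil, rfl⟩
  | @cons a b c hadj p ih =>
    intro hd hx hy
    have hb : b ∈ B := (hd ⟨(a, b), hadj⟩ (by simp [Walk.darts_cons])).2
    obtain ⟨p', hp'⟩ := ih (fun d hdm => hd d (by simp [Walk.darts_cons, hdm])) hb hy
    exact ⟨Walk.cons (by exact hadj) p', by show p'.length + 1 = p.length + 1; rw [hp']⟩

/-- push a walk in the induced subgraph down to `G` -/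
lemma push_walk {B : Set V} : ∀ {a b : B} (w : (G.induce B).Walk a b),
    ∃ w' : G.Walk a.1 b.1, w'.length = w.length ∧
      ∀ d ∈ w'.darts, d.fst ∈ B ∧ d.snd ∈ B := by
  intro a b w
  induction w with
  | nil => exact ⟨Walk.nil, rfl, by simp [Walk.darts_nil]⟩
  | @cons a c b hadj p ih =>
    obtain ⟨p', hp', hd⟩ := ih
    refine ⟨Walk.cons (by exact hadj) p', by show p'.length + 1 = p.length + 1; rw [hp'], ?_⟩
    intro d hdm
    change d ∈ (⟨(a.1, c.1), hadj⟩ : G.Dart) :: p'.darts at hdm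
    rcases List.mem_cons.mp hdm with h | h
    · subst h; exact ⟨a.2, c.2⟩
    · exact hd d h

/-- take the maximal prefix of darts satisfying `Q` -/
lemma take_run (Q : G.Dart → Prop) : ∀ {x y : V} (w : G.Walk x y),
    ∃ (v : V) (p : G.Walk x v) (b : G.Walk v y),
      p.length + b.length = w.length ∧
      w.darts = p.darts ++ b.darts ∧
      (∀ d ∈ p.darts, Q d) ∧
      (∀ d, b.darts.head? = some d → ¬ Q d) := by
  intro x y w
  induction w with
  | nil =>
    exact ⟨_, Walk.nil, Walk.nil, rfl, rfl, by simp [Walk.darts_nil], by simp [Walk.darts_nil]⟩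
  | @cons a b c hadj p ih =>
    by_cases hQ : Q ⟨(a, b), hadj⟩
    · obtain ⟨v, p', b', h1, h2, h3, h4⟩ := ih
      refine ⟨v, Walk.cons hadj p', b', ?_, ?_, ?_, h4⟩
      · simp only [Walk.length_cons]; omega
      · rw [Walk.darts_cons, Walk.darts_cons, h2]; rfl
      · intro d hd
        rw [Walk.darts_cons] at hd
        rcases List.mem_cons.mp hd with h | h
        · subst h; exact hQ
        · exact h3 d h
    · refine ⟨a, Walk.nil, Walk.cons hadj p, by simp, by simp [Walk.darts_nil], by simp [Walk.darts_nil], ?_⟩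
      intro d hd
      rw [Walk.darts_cons] at hd
      simp at hd
      subst hd
      exact hQ


lemma transfer (l : ℕ) (hodd : Odd l) {B1 B2 : Set V}
    (hfree : ∀ u v, G.Adj u v → (u ∈ B1 ∧ v ∈ B1) ∨ (u ∈ B2 ∧ v ∈ B2))
    (hdist : ∀ (u v : V) (hu1 : u ∈ B1) (hu2 : u ∈ B2) (hv1 : v ∈ B1) (hv2 : v ∈ B2),
      min ((G.induce B1).edist ⟨u, hu1⟩ ⟨v, hv1⟩) (((l + 1) / 2 : ℕ) : ℕ∞) =
      min ((G.induce B2).edist ⟨u, hu2⟩ ⟨v, hv2⟩) (((l + 1) / 2 : ℕ) : ℕ∞)) :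
    ∀ (n : ℕ) (x y : V) (hx : x ∈ B2) (hy : y ∈ B2) (w : G.Walk x y),
      (l + 1) * w.length + dc (fun d => ¬ (d.fst ∈ B2 ∧ d.snd ∈ B2)) w.darts ≤ n →
      2 * w.length ≤ l →
      ∃ w₂ : (G.induce B2).Walk ⟨x, hx⟩ ⟨y, hy⟩, w₂.length ≤ w.length := by
  set NQ : G.Dart → Prop := fun d => ¬ (d.fst ∈ B2 ∧ d.snd ∈ B2) with hNQdef
  intro n
  induction n using Nat.strong_induction_on with
  | _ n IH =>
  intro x y hx hy w hmeas hshort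
  by_cases hall : ∀ d ∈ w.darts, d.fst ∈ B2 ∧ d.snd ∈ B2
  · obtain ⟨w', hw'⟩ := lift_walk w hall hx hy
    exact ⟨w', le_of_eq hw'⟩
  · have hex : ∃ d ∈ w.darts, NQ d := by
      by_contra hc
      exact hall fun d hd => not_not.mp (fun hn => hc ⟨d, hd, hn⟩)
    obtain ⟨u, a, b0, hlen1, hdarts1, ha, hb0head⟩ :=
      take_run (fun d => d.fst ∈ B2 ∧ d.snd ∈ B2) w
    obtain ⟨v, p, b, hlen2, hdarts2, hp, hbhead⟩ := take_run NQ b0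
    obtain ⟨d0, hd0mem, hd0⟩ := hex
    have hd0b0 : d0 ∈ b0.darts := by
      rw [hdarts1] at hd0mem
      rcases List.mem_append.mp hd0mem with h | h
      · exact absurd (ha d0 h) hd0
      · exact h
    have hb0ne : b0.darts ≠ [] := by
      intro h; rw [h] at hd0b0; simp at hd0b0
    have hb0h := List.head?_eq_head hb0ne
    have hNQhead : NQ (b0.darts.head hb0ne) := hb0head _ hb0h
    have hpne : p.darts ≠ [] := by
      intro hnil
      have hbd : b.darts = b0.darts := by rw [hdarts2, hnil, List.nil_append]
      exact hbhead (b0.darts.head hb0ne) (by rw [hbd]; exact hb0h) hNQhead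
    -- memberships
    have hu2 : u ∈ B2 := by
      rcases hna : a.darts with _ | _
      · have hxu : x = u := Walk.eq_of_length_eq_zero
          (by rw [← a.length_darts, hna]; rfl)
        exact hxu ▸ hx
      · have hne : a.darts ≠ [] := by rw [hna]; simp
        have hgl := List.getLast?_eq_getLast hne
        have hmem : a.darts.getLast hne ∈ a.darts := List.getLast_mem hne
        have hq := ha _ hmem
        have hsnd := getLast?_snd a hgl
        rw [← hsnd]; exact hq.2
    have hph := List.head?_eq_head hpne
    have hpfirst : NQ (p.darts.head hpne) := hp _ (List.head_mem hpne)
    have hu1 : u ∈ B1 := by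
      have hfst := head?_fst p hph
      rcases hfree _ _ (p.darts.head hpne).adj with h | h
      · rw [← hfst]; exact h.1
      · exact absurd h hpfirst
    have hv1 : v ∈ B1 := by
      have hgl := List.getLast?_eq_getLast hpne
      have hmem := List.getLast_mem hpne
      have hNQl := hp _ hmem
      have hsnd := getLast?_snd p hgl
      rcases hfree _ _ (p.darts.getLast hpne).adj with h | h
      · rw [← hsnd]; exact h.2
      · exact absurd h hNQl
    have hv2 : v ∈ B2 := by
      rcases hnb : b.darts with _ | _
      · have hvy : v = y := Walk.eq_of_length_eq_zero
          (by rw [← b.length_darts, hnb]; rfl)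
        exact hvy ▸ hy
      · have hne : b.darts ≠ [] := by rw [hnb]; simp
        have hbh := List.head?_eq_head hne
        have hQ := hbhead _ hbh
        have hfst := head?_fst b hbh
        rw [← hfst]; exact (not_not.mp hQ).1
    -- lift p into B1
    have hpd : ∀ d ∈ p.darts, d.fst ∈ B1 ∧ d.snd ∈ B1 := by
      intro d hd
      rcases hfree _ _ d.adj with h | h
      · exact h
      · exact absurd (not_not_intro h) (not_not_intro (hp d hd))
    obtain ⟨p1, hp1len⟩ := lift_walk p hpd hu1 hv1
    obtain ⟨t, ht⟩ := hodd
    have hplen_le : p.length ≤ w.length := by omega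
    have hpc : p.length < (l + 1) / 2 := by omega
    have he1 : (G.induce B1).edist ⟨u, hu1⟩ ⟨v, hv1⟩ ≤ (p.length : ℕ∞) := by
      have h := SimpleGraph.edist_le p1
      rw [hp1len] at h
      exact h
    have hcast : (p.length : ℕ∞) < (((l + 1) / 2 : ℕ) : ℕ∞) := by exact_mod_cast hpc
    have he1lt : (G.induce B1).edist ⟨u, hu1⟩ ⟨v, hv1⟩ < (((l + 1) / 2 : ℕ) : ℕ∞) :=
      lt_of_le_of_lt he1 hcast
    have hmin := hdist u v hu1 hu2 hv1 hv2
    rw [min_eq_left he1lt.le] at hmin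
    have he2lt : (G.induce B2).edist ⟨u, hu2⟩ ⟨v, hv2⟩ < (((l + 1) / 2 : ℕ) : ℕ∞) := by
      by_contra hc2
      push_neg at hc2
      rw [min_eq_right hc2] at hmin
      exact absurd (hmin ▸ he1lt) (lt_irrefl _)
    have he2eq : (G.induce B2).edist ⟨u, hu2⟩ ⟨v, hv2⟩ =
        (G.induce B1).edist ⟨u, hu1⟩ ⟨v, hv1⟩ := by
      rw [min_eq_left he2lt.le] at hmin; exact hmin.symm
    have he2le : (G.induce B2).edist ⟨u, hu2⟩ ⟨v, hv2⟩ ≤ (p.length : ℕ∞) := by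
      rw [he2eq]; exact he1
    obtain ⟨p2', hp2'⟩ := SimpleGraph.exists_walk_of_edist_ne_top (ne_top_of_lt he2lt)
    have hp2'le : p2'.length ≤ p.length := by
      have h : (p2'.length : ℕ∞) ≤ (p.length : ℕ∞) := by rw [hp2']; exact he2le
      exact_mod_cast h
    obtain ⟨p2, hp2len, hp2darts⟩ := push_walk p2'
    set W : G.Walk x y := a.append (p2.append b) with hWdef
    have hWlen : W.length = a.length + (p2.length + b.length) := by
      simp [hWdef, Walk.length_append]
    have hWd : W.darts = a.darts ++ (p2.darts ++ b.darts) := by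
      simp [hWdef, Walk.darts_append]
    have hdcW : dc NQ W.darts = dc NQ b.darts := by
      rw [hWd, dc_append, dc_append,
        dc_eq_zero NQ a.darts (fun d hd => not_not_intro (ha d hd)),
        dc_eq_zero NQ p2.darts (fun d hd => not_not_intro (hp2darts d hd))]
      omega
    have hdcw : dc NQ w.darts = p.length + dc NQ b.darts := by
      rw [hdarts1, hdarts2, dc_append, dc_append,
        dc_eq_zero NQ a.darts (fun d hd => not_not_intro (ha d hd)),
        dc_eq_length NQ p.darts hp, p.length_darts]
      omega
    have hppos : 1 ≤ p.length := by
      have h := List.length_pos_iff.mpr hpne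
      rw [p.length_darts] at h
      omega
    have h1 : W.length ≤ w.length := by omega
    have hmeas' : (l + 1) * W.length + dc NQ W.darts < n := by
      by_cases hWw : W.length = w.length
      · rw [hWw, hdcW]; omega
      · have hlt : W.length < w.length := lt_of_le_of_ne h1 hWw
        have hmul : (l + 1) * W.length + (l + 1) ≤ (l + 1) * w.length := by
          have h := Nat.mul_le_mul_left (l + 1) (show W.length + 1 ≤ w.length by omega)
          rw [Nat.mul_add, Nat.mul_one] at h
          exact h
        rw [hdcW]; omega
    obtain ⟨w₂, hw₂⟩ := IH ((l + 1) * W.length + dc NQ W.darts) hmeas'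
      x y hx hy W le_rfl (by omega)
    exact ⟨w₂, le_trans hw₂ h1⟩


lemma main (l : ℕ) (hodd : Odd l) {B1 B2 : Set V}
    (hfree : ∀ u v, G.Adj u v → (u ∈ B1 ∧ v ∈ B1) ∨ (u ∈ B2 ∧ v ∈ B2))
    (hB1 : ∀ (x : B1) (w : (G.induce B1).Walk x x), Odd w.length → ¬ w.length ≤ l)
    (hB2 : ∀ (x : B2) (w : (G.induce B2).Walk x x), Odd w.length → ¬ w.length ≤ l)
    (hdist : ∀ (u v : V) (hu1 : u ∈ B1) (hu2 : u ∈ B2) (hv1 : v ∈ B1) (hv2 : v ∈ B2),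
      min ((G.induce B1).edist ⟨u, hu1⟩ ⟨v, hv1⟩) (((l + 1) / 2 : ℕ) : ℕ∞) =
      min ((G.induce B2).edist ⟨u, hu2⟩ ⟨v, hv2⟩) (((l + 1) / 2 : ℕ) : ℕ∞)) :
    ∀ (n : ℕ) (x : V) (w : G.Walk x x),
      (l + 1) * w.length + dc (fun d => ¬ (d.fst ∈ B1 ∧ d.snd ∈ B1)) w.darts ≤ n →
      Odd w.length → w.length ≤ l → False := by
  set NP : G.Dart → Prop := fun d => ¬ (d.fst ∈ B1 ∧ d.snd ∈ B1) with hNPdef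
  intro n
  induction n using Nat.strong_induction_on with
  | _ n IH =>
  intro x w hmeas hoddw hwle
  have hwpos : 1 ≤ w.length := by
    rcases Nat.eq_zero_or_pos w.length with h | h
    · rw [h] at hoddw; simp at hoddw
    · exact h
  have hwdne : w.darts ≠ [] := by
    intro h
    have hh := w.length_darts
    rw [h] at hh
    simp at hh
    omega
  by_cases h1 : ∀ d ∈ w.darts, d.fst ∈ B1 ∧ d.snd ∈ B1
  · have hwh := List.head?_eq_head hwdne
    have hx1 : x ∈ B1 := by
      have hf := head?_fst w hwh
      rw [← hf]; exact (h1 _ (List.head_mem hwdne)).1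
    obtain ⟨w1, hw1⟩ := lift_walk w h1 hx1 hx1
    exact hB1 ⟨x, hx1⟩ w1 (by rw [hw1]; exact hoddw) (by rw [hw1]; exact hwle)
  by_cases h2 : ∀ d ∈ w.darts, NP d
  · have hd2 : ∀ d ∈ w.darts, d.fst ∈ B2 ∧ d.snd ∈ B2 := by
      intro d hd
      rcases hfree _ _ d.adj with h | h
      · exact absurd h (h2 d hd)
      · exact h
    have hwh := List.head?_eq_head hwdne
    have hx2 : x ∈ B2 := by
      have hf := head?_fst w hwh
      rw [← hf]; exact (hd2 _ (List.head_mem hwdne)).1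
    obtain ⟨w2', hw2'⟩ := lift_walk w hd2 hx2 hx2
    exact hB2 ⟨x, hx2⟩ w2' (by rw [hw2']; exact hoddw) (by rw [hw2']; exact hwle)
  have hexP : ∃ d ∈ w.darts, ¬ NP d := by
    by_contra hc
    exact h2 fun d hd => by_contra fun hn => hc ⟨d, hd, hn⟩
  have hexNP : ∃ d ∈ w.darts, NP d := by
    by_contra hc
    exact h1 fun d hd => by_contra fun hn => hc ⟨d, hd, hn⟩
  -- Step 0: rotate so that the basepoint is in B1
  obtain ⟨t0, a, b, hl0, hd0, ha, hbhead⟩ := take_run NP w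
  obtain ⟨dP, hdPmem, hdP⟩ := hexP
  have hdPb : dP ∈ b.darts := by
    rw [hd0] at hdPmem
    rcases List.mem_append.mp hdPmem with h | h
    · exact absurd (ha dP h) hdP
    · exact h
  have hbne : b.darts ≠ [] := fun h => by rw [h] at hdPb; simp at hdPb
  have hbh := List.head?_eq_head hbne
  have ht0B1 : t0 ∈ B1 := by
    have hf := head?_fst b hbh
    have hnn := not_not.mp (hbhead _ hbh)
    rw [← hf]; exact hnn.1
  set w2 : G.Walk t0 t0 := b.append a with hw2def
  have hw2len : w2.length = w.length := by rw [hw2def, Walk.length_append]; omega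
  have hw2darts : w2.darts = b.darts ++ a.darts := by rw [hw2def, Walk.darts_append]
  have hw2mem : ∀ d : G.Dart, d ∈ w2.darts ↔ d ∈ w.darts := by
    intro d; rw [hw2darts, hd0]; simp only [List.mem_append]; tauto
  have hdc2 : dc NP w2.darts = dc NP w.darts := by
    rw [hw2darts, hd0, dc_append, dc_append]; omega
  -- Step 1: strip the maximal B1-prefix
  obtain ⟨u, p0, q0, hl1, hd1, hp0, hq0head⟩ := take_run (fun d => ¬ NP d) w2
  obtain ⟨dN, hdNmem, hdN⟩ := hexNP
  have hdNq0 : dN ∈ q0.darts := by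
    have hmem : dN ∈ w2.darts := (hw2mem dN).mpr hdNmem
    rw [hd1] at hmem
    rcases List.mem_append.mp hmem with h | h
    · exact absurd hdN (hp0 dN h)
    · exact h
  have hq0ne : q0.darts ≠ [] := fun h => by rw [h] at hdNq0; simp at hdNq0
  have hq0h := List.head?_eq_head hq0ne
  have hq0NP : NP (q0.darts.head hq0ne) := not_not.mp (hq0head _ hq0h)
  -- Step 2: the maximal B2-run
  obtain ⟨v, p1, q1, hl2, hd2, hp1, hq1head⟩ := take_run NP q0
  have hp1ne : p1.darts ≠ [] := by
    intro hnil
    have hq1d : q1.darts = q0.darts := by rw [hd2, hnil, List.nil_append]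
    exact hq1head _ (by rw [hq1d]; exact hq0h) hq0NP
  -- memberships
  have hu1 : u ∈ B1 := by
    rcases hna : p0.darts with _ | _
    · have h : t0 = u := Walk.eq_of_length_eq_zero
        (by rw [← p0.length_darts, hna]; rfl)
      exact h ▸ ht0B1
    · have hne : p0.darts ≠ [] := by rw [hna]; simp
      have hgl := List.getLast?_eq_getLast hne
      have hmem := List.getLast_mem hne
      have hq := not_not.mp (hp0 _ hmem)
      have hsnd := getLast?_snd p0 hgl
      rw [← hsnd]; exact hq.2
  have hp1h := List.head?_eq_head hp1ne
  have hp1first : NP (p1.darts.head hp1ne) := hp1 _ (List.head_mem hp1ne)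
  have hu2 : u ∈ B2 := by
    have hf := head?_fst p1 hp1h
    rcases hfree _ _ (p1.darts.head hp1ne).adj with h | h
    · exact absurd h hp1first
    · rw [← hf]; exact h.1
  have hv2 : v ∈ B2 := by
    have hgl := List.getLast?_eq_getLast hp1ne
    have hmem := List.getLast_mem hp1ne
    have hsnd := getLast?_snd p1 hgl
    rcases hfree _ _ (p1.darts.getLast hp1ne).adj with h | h
    · exact absurd h (hp1 _ hmem)
    · rw [← hsnd]; exact h.2
  have hv1 : v ∈ B1 := by
    rcases hnb : q1.darts with _ | _
    · have h : v = t0 := Walk.eq_of_length_eq_zero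
        (by rw [← q1.length_darts, hnb]; rfl)
      exact h ▸ ht0B1
    · have hne : q1.darts ≠ [] := by rw [hnb]; simp
      have hbh2 := List.head?_eq_head hne
      have hf := head?_fst q1 hbh2
      have hnn := not_not.mp (hq1head _ hbh2)
      rw [← hf]; exact hnn.1
  set q : G.Walk v u := q1.append p0 with hqdef
  set s := p1.length with hsdef
  set r := q.length with hrdef
  have hrr : r = q1.length + p0.length := by rw [hrdef, hqdef, Walk.length_append]
  have hk : s + r = w.length := by rw [← hw2len]; omega
  have hspos : 1 ≤ s := by
    have h := List.length_pos_iff.mpr hp1ne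
    rw [p1.length_darts] at h
    omega
  have hqd : q.darts = q1.darts ++ p0.darts := by rw [hqdef, Walk.darts_append]
  have hdcq : dc NP w.darts = s + dc NP q.darts := by
    rw [← hdc2, hd1, hd2, dc_append, dc_append, hqd, dc_append,
      dc_eq_zero NP p0.darts (fun d hd => hp0 d hd),
      dc_eq_length NP p1.darts hp1, p1.length_darts]
    omega
  have hp1B2 : ∀ d ∈ p1.darts, d.fst ∈ B2 ∧ d.snd ∈ B2 := by
    intro d hd
    rcases hfree _ _ d.adj with h | h
    · exact absurd h (hp1 d hd)
    · exact h
  obtain ⟨pw2, hpw2len⟩ := lift_walk p1 hp1B2 hu2 hv2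
  obtain ⟨t, ht⟩ := hodd
  have hm0 : ∃ m0 : ℕ, (G.induce B2).edist ⟨u, hu2⟩ ⟨v, hv2⟩ ≤ (m0 : ℕ∞) ∧
      2 * m0 ≤ l ∧ s + m0 ≤ l ∧ r + m0 ≤ l ∧ m0 ≤ s := by
    by_cases hcase : 2 * s ≤ l
    · refine ⟨s, ?_, hcase, by omega, by omega, le_rfl⟩
      have h := SimpleGraph.edist_le pw2
      rw [hpw2len] at h
      exact h
    · obtain ⟨qw2, hqw2⟩ := transfer l ⟨t, ht⟩ hfree hdist
        ((l + 1) * q.length + dc (fun d => ¬ (d.fst ∈ B2 ∧ d.snd ∈ B2)) q.darts)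
        v u hv2 hu2 q le_rfl (by omega)
      refine ⟨r, ?_, by omega, by omega, by omega, by omega⟩
      have h := SimpleGraph.edist_le qw2
      rw [SimpleGraph.edist_comm]
      exact le_trans h (by exact_mod_cast hqw2)
  obtain ⟨m0, hm0le, hm0l, hsm0, hrm0, hm0s⟩ := hm0
  have hm0c : m0 < (l + 1) / 2 := by omega
  have he2lt : (G.induce B2).edist ⟨u, hu2⟩ ⟨v, hv2⟩ < (((l + 1) / 2 : ℕ) : ℕ∞) :=
    lt_of_le_of_lt hm0le (by exact_mod_cast hm0c)
  have hmin := hdist u v hu1 hu2 hv1 hv2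
  rw [min_eq_left he2lt.le] at hmin
  have he1lt : (G.induce B1).edist ⟨u, hu1⟩ ⟨v, hv1⟩ < (((l + 1) / 2 : ℕ) : ℕ∞) := by
    by_contra hc2
    push_neg at hc2
    rw [min_eq_right hc2] at hmin
    exact absurd (hmin ▸ he2lt) (lt_irrefl _)
  have he1eq : (G.induce B1).edist ⟨u, hu1⟩ ⟨v, hv1⟩ =
      (G.induce B2).edist ⟨u, hu2⟩ ⟨v, hv2⟩ := by
    rw [min_eq_left he1lt.le] at hmin; exact hmin
  obtain ⟨P2, hP2⟩ := SimpleGraph.exists_walk_of_edist_ne_top (ne_top_of_lt he2lt)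
  set d := P2.length with hddef
  have hdm0 : d ≤ m0 := by
    have h : (d : ℕ∞) ≤ (m0 : ℕ∞) := by rw [hP2]; exact hm0le
    exact_mod_cast h
  obtain ⟨P1, hP1⟩ := SimpleGraph.exists_walk_of_edist_ne_top (ne_top_of_lt he1lt)
  have hP1len : P1.length = d := by
    have h : (P1.length : ℕ∞) = (d : ℕ∞) := by rw [hP1, he1eq, ← hP2]
    exact_mod_cast h
  rcases Nat.even_or_odd (s + d) with hpar | hpar
  · -- r + d is odd: recurse on a strictly smaller measure
    have hodd2 : Odd (r + d) := by
      rw [Nat.odd_iff] at hoddw ⊢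
      rw [Nat.even_iff] at hpar
      omega
    obtain ⟨P1G, hP1Glen, hP1Gdarts⟩ := push_walk P1
    set W : G.Walk u u := P1G.append q with hWdef
    have hWlen : W.length = d + r := by
      rw [hWdef, Walk.length_append, hP1Glen, hP1len]
    have hWd : W.darts = P1G.darts ++ q.darts := by rw [hWdef, Walk.darts_append]
    have hdcW : dc NP W.darts = dc NP q.darts := by
      rw [hWd, dc_append,
        dc_eq_zero NP P1G.darts (fun dd hdd => not_not_intro (hP1Gdarts dd hdd))]
      omega
    have hdle : d ≤ s := le_trans hdm0 hm0s
    have hmeasW : (l + 1) * W.length + dc NP W.darts < n := by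
      rw [hWlen, hdcW]
      rcases eq_or_lt_of_le hdle with heq | hlt
      · rw [heq, hk]
        omega
      · have hws : (l + 1) * (s + r) + dc NP w.darts ≤ n := by rw [hk]; exact hmeas
        have hmul : (l + 1) * (d + r) + (l + 1) ≤ (l + 1) * (s + r) := by
          have h := Nat.mul_le_mul_left (l + 1) (show d + r + 1 ≤ s + r by omega)
          rw [Nat.mul_add, Nat.mul_one] at h
          exact h
        omega
    exact IH ((l + 1) * W.length + dc NP W.darts) hmeasW u W le_rfl
      (by rw [hWlen, Nat.add_comm]; exact hodd2) (by rw [hWlen]; omega)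
  · -- s + d is odd: closed odd walk inside B2, contradiction
    have hClen : (pw2.append P2.reverse).length = s + d := by
      rw [Walk.length_append, Walk.length_reverse, hpw2len]
    exact hB2 ⟨u, hu2⟩ (pw2.append P2.reverse)
      (by rw [hClen]; exact hpar) (by rw [hClen]; omega)

end Stmt16Aux

/-- Free amalgamation of odd-cycle-free graphs with agreeing truncated
distances contains no homomorphic image of an odd cycle of length at most `l`
(equivalently, no closed walk of odd length at most `l`). -/
theorem stmt16 (l : ℕ) (hl : 5 ≤ l) (hodd : Odd l)
    (V : Type) (G : SimpleGraph V) (B1 B2 : Set V)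
    (hcover : B1 ∪ B2 = Set.univ)
    -- freeness: every edge lies within B1 or within B2
    (hfree : ∀ u v, G.Adj u v → (u ∈ B1 ∧ v ∈ B1) ∨ (u ∈ B2 ∧ v ∈ B2))
    -- B1 and B2 contain no homomorphic image of C_l:
    -- no closed walk of odd length ≤ l
    (hB1 : ∀ (x : B1) (w : (G.induce B1).Walk x x), Odd w.length → ¬ w.length ≤ l)
    (hB2 : ∀ (x : B2) (w : (G.induce B2).Walk x x), Odd w.length → ¬ w.length ≤ l)
    -- truncated distances (capped at (l+1)/2) agree on A = B1 ∩ B2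
    (hdist : ∀ (u v : V) (hu1 : u ∈ B1) (hu2 : u ∈ B2) (hv1 : v ∈ B1) (hv2 : v ∈ B2),
      min ((G.induce B1).edist ⟨u, hu1⟩ ⟨v, hv1⟩) (((l + 1) / 2 : ℕ) : ℕ∞) =
      min ((G.induce B2).edist ⟨u, hu2⟩ ⟨v, hv2⟩) (((l + 1) / 2 : ℕ) : ℕ∞)) :
    ∀ (x : V) (w : G.Walk x x), Odd w.length → ¬ w.length ≤ l := by
  intro x w hoddw hle
  exact Stmt16Aux.main l hodd hfree hB1 hB2 hdist
    ((l + 1) * w.length +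
      Stmt16Aux.dc (fun d => ¬ (d.fst ∈ B1 ∧ d.snd ∈ B1)) w.darts)
    x w le_rfl hoddw hle
end

section
/- Ramsey theorem for structures with finitely many unary functions: for every finite ordered structure A with m unary functions and every finite ordered structure B with m unary functions, there is a finite ordered structure C with m unary functions such that for every 2-colouring of the embeddings of A into C there exists an embedding of B into C all of whose induced embeddings of A are monochromatic. -/
/-- An ordered structure with `m` unary functions. -/
structure OFunStr (m : ℕ) where
  V : Type
  fn : Fin m → V → V
  le : V → V → Prop
  refl : ∀ x, le x x
  antisymm : ∀ x y, le x y → le y x → x = y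
  trans : ∀ x y z, le x y → le y z → le x z
  total : ∀ x y, le x y ∨ le y x

/-- An embedding of ordered structures with `m` unary functions. -/
def OFEmb {m : ℕ} (A B : OFunStr m) (g : A.V → B.V) : Prop :=
  Function.Injective g ∧
  (∀ x y, A.le x y ↔ B.le (g x) (g y)) ∧
  (∀ (i : Fin m) (x : A.V), g (A.fn i x) = B.fn i (g x))

namespace Stmt17Aux

variable {m : ℕ}

lemma OFEmb.comp {X Y Z : OFunStr m} {u : X.V → Y.V} {v : Y.V → Z.V}
    (hu : OFEmb X Y u) (hv : OFEmb Y Z v) : OFEmb X Z (v ∘ u) :=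
  ⟨hv.1.comp hu.1, fun x y => (hu.2.1 x y).trans (hv.2.1 _ _),
   fun i x => by simp [Function.comp, hu.2.2 i x, hv.2.2 i (u x)]⟩

/-- iterated application of unary functions -/
def applyL (X : OFunStr m) (l : List (Fin m)) (x : X.V) : X.V :=
  l.foldr (fun i y => X.fn i y) x

@[simp] lemma applyL_nil (X : OFunStr m) (x : X.V) : applyL X [] x = x := rfl

@[simp] lemma applyL_cons (X : OFunStr m) (i : Fin m) (l : List (Fin m)) (x : X.V) :
    applyL X (i :: l) x = X.fn i (applyL X l x) := rfl

lemma applyL_fn (X : OFunStr m) (l : List (Fin m)) (i : Fin m) (b : X.V) :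
    applyL X l (X.fn i b) = applyL X (l ++ [i]) b := by
  simp [applyL, List.foldr_append]

/-- the vertex closure of `b` -/
def clS (X : OFunStr m) (b : X.V) : Set X.V := {x | ∃ l, x = applyL X l b}

lemma self_mem_clS (X : OFunStr m) (b : X.V) : b ∈ clS X b := ⟨[], rfl⟩

lemma fn_mem_clS (X : OFunStr m) {b x : X.V} (hx : x ∈ clS X b) (i : Fin m) :
    X.fn i x ∈ clS X b := by obtain ⟨l, rfl⟩ := hx; exact ⟨i :: l, rfl⟩

lemma applyL_mem_clS (X : OFunStr m) (b : X.V) (l : List (Fin m)) :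
    applyL X l b ∈ clS X b := ⟨l, rfl⟩

lemma clS_fn_subset (X : OFunStr m) (b : X.V) (i : Fin m) :
    clS X (X.fn i b) ⊆ clS X b := by
  rintro x ⟨l, rfl⟩; exact ⟨l ++ [i], (applyL_fn X l i b)⟩

lemma applyL_comm (X : OFunStr m) {θ : X.V → X.V} {b b' : X.V}
    (hcomm : ∀ i, ∀ x ∈ clS X b, θ (X.fn i x) = X.fn i (θ x)) (hb : θ b = b')
    (l : List (Fin m)) : θ (applyL X l b) = applyL X l b' := by
  induction l with
  | nil => exact hb
  | cons i l ih =>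
      simp only [applyL_cons]
      rw [hcomm i _ (applyL_mem_clS X b l), ih]

lemma applyL_emb {X Y : OFunStr m} {e : X.V → Y.V} (he : OFEmb X Y e)
    (l : List (Fin m)) (x : X.V) : e (applyL X l x) = applyL Y l (e x) := by
  induction l with
  | nil => rfl
  | cons i l ih => simp only [applyL_cons, he.2.2 i, ih]

lemma clS_image {X Y : OFunStr m} {e : X.V → Y.V} (he : OFEmb X Y e) (a : X.V) :
    clS Y (e a) = e '' clS X a := by
  ext y; constructor
  · rintro ⟨l, rfl⟩; exact ⟨applyL X l a, ⟨l, rfl⟩, (applyL_emb he l a)⟩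
  · rintro ⟨x, ⟨l, rfl⟩, rfl⟩; exact ⟨l, (applyL_emb he l a)⟩

/-- pre-homogeneous sets -/
lemma preHom (k : ℕ)
    (IH : ∀ n, ∃ N, ∀ X : Finset ℕ, N ≤ X.card → ∀ χ : Finset ℕ → Bool,
      ∃ H, H ⊆ X ∧ H.card = n ∧ ∃ c, ∀ S ⊆ H, S.card = k → χ S = c) :
    ∀ M, ∃ N, ∀ X : Finset ℕ, N ≤ X.card → ∀ χ : Finset ℕ → Bool,
      ∃ H, H ⊆ X ∧ H.card = M ∧ ∃ c : ℕ → Bool,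
        ∀ S ⊆ H, S.card = k + 1 → ∀ a ∈ S, (∀ b ∈ S, a ≤ b) → χ S = c a := by
  intro M
  induction M with
  | zero =>
      refine ⟨0, fun X _ χ => ⟨∅, Finset.empty_subset _, rfl, fun _ => false, ?_⟩⟩
      intro S hS hcard a ha _
      have := Finset.card_le_card hS
      simp only [Finset.card_empty] at this; omega
  | succ M ihM =>
      obtain ⟨NM, hNM⟩ := ihM
      obtain ⟨NR, hNR⟩ := IH NM
      refine ⟨NR + 1, fun X hX χ => ?_⟩
      have hne : X.Nonempty := Finset.card_pos.mp (by omega)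
      set a := X.min' hne with ha
      have haX : a ∈ X := X.min'_mem hne
      have hX' : NR ≤ (X.erase a).card := by
        rw [Finset.card_erase_of_mem haX]; omega
      obtain ⟨Y, hYX', hYcard, cA, hcA⟩ := hNR (X.erase a) hX' (fun S => χ (insert a S))
      obtain ⟨H', hH'Y, hH'card, c', hc'⟩ := hNM Y (le_of_eq hYcard.symm) χ
      have haH' : a ∉ H' := fun h => Finset.notMem_erase a X (hYX' (hH'Y h))
      refine ⟨insert a H', ?_, ?_, fun x => if x = a then cA else c' x, ?_⟩
      · intro x hx
        rcases Finset.mem_insert.mp hx with rfl | hx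
        · exact haX
        · exact Finset.mem_of_mem_erase (hYX' (hH'Y hx))
      · rw [Finset.card_insert_of_notMem haH', hH'card]
      · intro S hS hScard a₀ ha₀S hmin
        by_cases haS : a ∈ S
        · have ha₀ : a₀ = a := by
            rcases Finset.mem_insert.mp (hS ha₀S) with h | h
            · exact h
            · have h1 : a₀ ∈ X := Finset.mem_of_mem_erase (hYX' (hH'Y h))
              exact le_antisymm (hmin a haS) (X.min'_le a₀ h1)
          subst ha₀
          have hsub : S.erase a ⊆ Y := by
            intro x hx
            have hxS := Finset.mem_of_mem_erase hx
            have hxa := Finset.ne_of_mem_erase hx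
            rcases Finset.mem_insert.mp (hS hxS) with h | h
            · exact absurd h hxa
            · exact hH'Y h
          have : χ (insert a (S.erase a)) = cA :=
            hcA _ hsub (by rw [Finset.card_erase_of_mem haS, hScard]; omega)
          rw [Finset.insert_erase haS] at this
          simpa using this
        · have hsub : S ⊆ H' := by
            intro x hx
            rcases Finset.mem_insert.mp (hS hx) with rfl | h
            · exact absurd hx haS
            · exact h
          have hne' : a₀ ≠ a := fun h => haS (h ▸ ha₀S)
          rw [hc' S hsub hScard a₀ ha₀S hmin]
          simp [hne']

/-- finite Ramsey theorem -/
theorem ramseyAux : ∀ k n : ℕ, ∃ N : ℕ, ∀ X : Finset ℕ, N ≤ X.card →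
    ∀ χ : Finset ℕ → Bool, ∃ H, H ⊆ X ∧ H.card = n ∧
      ∃ c : Bool, ∀ S ⊆ H, S.card = k → χ S = c := by
  intro k
  induction k with
  | zero =>
      intro n
      refine ⟨n, fun X hX χ => ?_⟩
      obtain ⟨H, hHX, hHcard⟩ := Finset.exists_subset_card_eq hX
      refine ⟨H, hHX, hHcard, χ ∅, fun S hS hcard => ?_⟩
      rw [Finset.card_eq_zero.mp hcard]
  | succ k IH =>
      intro n
      obtain ⟨N, hN⟩ := preHom k IH (2 * n)
      refine ⟨N, fun X hX χ => ?_⟩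
      obtain ⟨H₁, hH₁X, hH₁card, c, hc⟩ := hN X hX χ
      set T := H₁.filter (fun x => c x = true) with hT
      by_cases hTn : n ≤ T.card
      · obtain ⟨H, hHT, hHcard⟩ := Finset.exists_subset_card_eq hTn
        refine ⟨H, fun x hx => hH₁X (Finset.mem_of_mem_filter _ (hHT hx)), hHcard, true, ?_⟩
        intro S hS hScard
        have hSne : S.Nonempty := Finset.card_pos.mp (by omega)
        have h1 : χ S = c (S.min' hSne) := by
          refine hc S (fun x hx => Finset.mem_of_mem_filter _ (hHT (hS hx))) hScard _
            (S.min'_mem hSne) (fun b hb => S.min'_le b hb)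
        rw [h1]
        have := hHT (hS (S.min'_mem hSne))
        exact (Finset.mem_filter.mp this).2
      · have hsub : T ⊆ H₁ := Finset.filter_subset _ _
        have hF : n ≤ (H₁ \ T).card := by
          rw [Finset.card_sdiff_of_subset hsub, hH₁card]; omega
        obtain ⟨H, hHT, hHcard⟩ := Finset.exists_subset_card_eq hF
        refine ⟨H, fun x hx => hH₁X (Finset.mem_sdiff.mp (hHT hx)).1, hHcard, false, ?_⟩
        intro S hS hScard
        have hSne : S.Nonempty := Finset.card_pos.mp (by omega)
        have h1 : χ S = c (S.min' hSne) := by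
          refine hc S (fun x hx => (Finset.mem_sdiff.mp (hHT (hS hx))).1) hScard _
            (S.min'_mem hSne) (fun b hb => S.min'_le b hb)
        rw [h1]
        have hmem := Finset.mem_sdiff.mp (hHT (hS (S.min'_mem hSne)))
        have : ¬ c (S.min' hSne) = true := fun hct =>
          hmem.2 (Finset.mem_filter.mpr ⟨hmem.1, hct⟩)
        simpa using this

end Stmt17Aux
namespace Stmt17Aux

/-- standard structure on `Fin n` -/
abbrev stdStr {m : ℕ} (n : ℕ) (f : Fin m → Fin n → Fin n) : OFunStr m where
  V := Fin n
  fn := f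
  le := (· ≤ ·)
  refl := fun x => le_refl x
  antisymm := fun _ _ => le_antisymm
  trans := fun _ _ _ => le_trans
  total := fun x y => le_total x y

section Core

variable {m : ℕ} (n : ℕ) (fB : Fin m → Fin n → Fin n)

/-- closure as a finset -/
noncomputable def clF (b : Fin n) : Finset (Fin n) :=
  (Set.toFinite (clS (stdStr n fB) b)).toFinset

lemma mem_clF {x b : Fin n} : x ∈ clF n fB b ↔ x ∈ clS (stdStr n fB) b :=
  Set.Finite.mem_toFinset _

lemma self_mem_clF (b : Fin n) : b ∈ clF n fB b :=
  (mem_clF n fB).mpr (self_mem_clS (stdStr n fB) b)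

lemma fn_mem_clF {b x : Fin n} (hx : x ∈ clF n fB b) (i : Fin m) :
    fB i x ∈ clF n fB b :=
  (mem_clF n fB).mpr (fn_mem_clS (stdStr n fB) ((mem_clF n fB).mp hx) i)

noncomputable def rB (b : Fin n) : ℕ := (clF n fB b).card

lemma rB_le (b : Fin n) : rB n fB b ≤ n := by
  have := Finset.card_le_univ (clF n fB b)
  simpa [rB] using this

/-- `p`-th smallest element of the closure of `b` -/
noncomputable def enumF (b : Fin n) (p : ℕ) : Fin n :=
  if h : p < rB n fB b then ((clF n fB b).orderIsoOfFin rfl ⟨p, h⟩ : ↥(clF n fB b)).1 else b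

/-- rank of `x` in the closure of `b` -/
noncomputable def rankF (b : Fin n) (x : Fin n) : ℕ :=
  if h : x ∈ clF n fB b then (((clF n fB b).orderIsoOfFin rfl).symm ⟨x, h⟩ : Fin (rB n fB b)).1
  else 0

lemma enumF_mem {b : Fin n} {p : ℕ} (hp : p < rB n fB b) : enumF n fB b p ∈ clF n fB b := by
  rw [enumF, dif_pos hp]; exact ((clF n fB b).orderIsoOfFin rfl ⟨p, hp⟩).2

lemma rankF_lt {b x : Fin n} (hx : x ∈ clF n fB b) : rankF n fB b x < rB n fB b := by
  rw [rankF, dif_pos hx]; exact (((clF n fB b).orderIsoOfFin rfl).symm ⟨x, hx⟩).isLt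

lemma enumF_rankF {b x : Fin n} (hx : x ∈ clF n fB b) :
    enumF n fB b (rankF n fB b x) = x := by
  have h1 : rankF n fB b x < rB n fB b := rankF_lt n fB hx
  rw [enumF, dif_pos h1]
  have h2 : (⟨rankF n fB b x, h1⟩ : Fin (rB n fB b)) =
      ((clF n fB b).orderIsoOfFin rfl).symm ⟨x, hx⟩ := by
    apply Fin.ext; simp [rankF, dif_pos hx]
  have h3 := congrArg (fun p : Fin (rB n fB b) => (((clF n fB b).orderIsoOfFin rfl) p : Fin n)) h2
  simp only [OrderIso.apply_symm_apply] at h3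
  exact h3

lemma rankF_enumF {b : Fin n} {p : ℕ} (hp : p < rB n fB b) :
    rankF n fB b (enumF n fB b p) = p := by
  have hm : enumF n fB b p ∈ clF n fB b := enumF_mem n fB hp
  rw [rankF, dif_pos hm]
  have h2 : (⟨enumF n fB b p, hm⟩ : ↥(clF n fB b)) =
      (clF n fB b).orderIsoOfFin rfl ⟨p, hp⟩ := by
    apply Subtype.ext
    show enumF n fB b p = _
    rw [enumF, dif_pos hp]
  rw [h2, OrderIso.symm_apply_apply]

lemma enumF_strictMono {b : Fin n} {p q : ℕ} (hpq : p < q) (hq : q < rB n fB b) :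
    enumF n fB b p < enumF n fB b q := by
  have hp : p < rB n fB b := lt_trans hpq hq
  rw [enumF, dif_pos hp, enumF, dif_pos hq]
  have : ((clF n fB b).orderIsoOfFin rfl ⟨p, hp⟩) < ((clF n fB b).orderIsoOfFin rfl ⟨q, hq⟩) := by
    rw [OrderIso.lt_iff_lt]
    exact hpq
  exact this

lemma rankF_le_iff {b x y : Fin n} (hx : x ∈ clF n fB b) (hy : y ∈ clF n fB b) :
    x ≤ y ↔ rankF n fB b x ≤ rankF n fB b y := by
  rw [rankF, dif_pos hx, rankF, dif_pos hy]
  rw [show ((((clF n fB b).orderIsoOfFin rfl).symm ⟨x, hx⟩ : Fin (rB n fB b)).1 ≤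
      (((clF n fB b).orderIsoOfFin rfl).symm ⟨y, hy⟩ : Fin (rB n fB b)).1) ↔
      (((clF n fB b).orderIsoOfFin rfl).symm ⟨x, hx⟩ ≤
      ((clF n fB b).orderIsoOfFin rfl).symm ⟨y, hy⟩) from Iff.rfl]
  rw [OrderIso.le_iff_le]
  exact ⟨fun h => h, fun h => h⟩

end Core

end Stmt17Aux
namespace Stmt17Aux

/-- vertex type of the Ramsey witness structure -/
def CV (m n N : ℕ) : Type :=
  Fin (n+1) × Fin (n+1) × (Fin m → Fin (n+1) → Fin (n+1)) × (Fin (n+1) → Fin (N+1))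

instance (m n N : ℕ) : Finite (CV m n N) := by unfold CV; infer_instance

def toIdx (n x : ℕ) : Fin (n+1) := ⟨min x n, by omega⟩

lemma toIdx_inj {n x y : ℕ} (hx : x ≤ n) (hy : y ≤ n) (h : toIdx n x = toIdx n y) : x = y := by
  have := congrArg Fin.val h
  simp only [toIdx] at this
  omega

section Core2

variable {m : ℕ} (n N : ℕ) (fB : Fin m → Fin n → Fin n)

/-- normal form of the pointed closure of `b` with positions `s` -/
noncomputable def mkC (b : Fin n) (s : Fin n → Fin (N+1)) : CV m n N :=
  (toIdx n (rB n fB b), toIdx n (rankF n fB b b),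
   fun i p => if p.1 < rB n fB b then toIdx n (rankF n fB b (fB i (enumF n fB b p.1))) else 0,
   fun p => if p.1 < rB n fB b then s (enumF n fB b p.1) else 0)

lemma lt_of_mono {b : Fin n} {θ : Fin n → Fin n}
    (hmono : ∀ x ∈ clF n fB b, ∀ y ∈ clF n fB b, (x ≤ y ↔ θ x ≤ θ y))
    {x y : Fin n} (hx : x ∈ clF n fB b) (hy : y ∈ clF n fB b) (hxy : x < y) : θ x < θ y := by
  rcases lt_or_ge (θ x) (θ y) with h | h
  · exact h
  · exact absurd ((hmono y hy x hx).mpr h) (not_le_of_gt hxy)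

/-- key well-definedness lemma: order isomorphic pointed closures with matching
position data yield the same normal form -/
lemma mkC_eq {θ : Fin n → Fin n} {b b' : Fin n} {s s' : Fin n → Fin (N+1)}
    (hmap : ∀ x ∈ clF n fB b, θ x ∈ clF n fB b')
    (hsurj : ∀ y ∈ clF n fB b', ∃ x ∈ clF n fB b, θ x = y)
    (hmono : ∀ x ∈ clF n fB b, ∀ y ∈ clF n fB b, (x ≤ y ↔ θ x ≤ θ y))
    (hpt : θ b = b')
    (hcomm : ∀ i : Fin m, ∀ x ∈ clF n fB b, θ (fB i x) = fB i (θ x))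
    (hs : ∀ x ∈ clF n fB b, s' (θ x) = s x) :
    mkC n N fB b s = mkC n N fB b' s' := by
  have hinj : ∀ x ∈ clF n fB b, ∀ y ∈ clF n fB b, θ x = θ y → x = y := by
    intro x hx y hy h
    have h1 : x ≤ y := (hmono x hx y hy).mpr (le_of_eq h)
    have h2 : y ≤ x := (hmono y hy x hx).mpr (le_of_eq h.symm)
    exact le_antisymm h1 h2
  have himg : clF n fB b' = (clF n fB b).image θ := by
    ext y
    rw [Finset.mem_image]
    constructor
    · intro hy; obtain ⟨x, hx, hxy⟩ := hsurj y hy; exact ⟨x, hx, hxy⟩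
    · rintro ⟨x, hx, rfl⟩; exact hmap x hx
  have hr : rB n fB b' = rB n fB b := by
    rw [rB, himg, Finset.card_image_of_injOn]
    · rfl
    · intro x hx y hy h
      exact hinj x (by simpa using hx) y (by simpa using hy) h
  -- θ maps the p-th element of cl b to the p-th element of cl b'
  have henum : ∀ p : ℕ, p < rB n fB b → θ (enumF n fB b p) = enumF n fB b' p := by
    have hcard : (clF n fB b').card = rB n fB b := hr
    have humono : StrictMono (fun p : Fin (rB n fB b) => θ (enumF n fB b p.1)) := by
      intro p q hpq
      exact lt_of_mono n fB hmono (enumF_mem n fB p.2) (enumF_mem n fB q.2)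
        (enumF_strictMono n fB hpq q.2)
    have humem : ∀ p : Fin (rB n fB b), θ (enumF n fB b p.1) ∈ clF n fB b' :=
      fun p => hmap _ (enumF_mem n fB p.2)
    have hu := Finset.orderEmbOfFin_unique hcard humem humono
    intro p hp
    have h1 : θ (enumF n fB b p) = (clF n fB b').orderEmbOfFin hcard ⟨p, hp⟩ :=
      congrFun hu ⟨p, hp⟩
    rw [h1, enumF, dif_pos (hr ▸ hp)]
    rw [Finset.coe_orderIsoOfFin_apply]
    exact Finset.orderEmbOfFin_eq_orderEmbOfFin_iff.mpr rfl
  have hrank : ∀ x ∈ clF n fB b, rankF n fB b' (θ x) = rankF n fB b x := by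
    intro x hx
    have hp : rankF n fB b x < rB n fB b := rankF_lt n fB hx
    conv_lhs => rw [← enumF_rankF n fB hx]
    rw [henum _ hp]
    exact rankF_enumF n fB (hr ▸ hp)
  -- now compare components
  unfold mkC
  refine Prod.ext ?_ (Prod.ext ?_ (Prod.ext ?_ ?_))
  · simp only [hr]
  · have h2 : rankF n fB b' b' = rankF n fB b b := by
      rw [← hrank b (self_mem_clF n fB b), hpt]
    simp only [h2]
  · funext i p
    simp only [hr]
    by_cases hp : p.1 < rB n fB b
    · simp only [if_pos hp]
      congr 1
      rw [← henum _ hp, ← hcomm i _ (enumF_mem n fB hp),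
        hrank _ (fn_mem_clF n fB (enumF_mem n fB hp) i)]
    · simp only [if_neg hp]
  · funext p
    simp only [hr]
    by_cases hp : p.1 < rB n fB b
    · simp only [if_pos hp]
      rw [← henum _ hp, hs _ (enumF_mem n fB hp)]
    · simp only [if_neg hp]

end Core2

end Stmt17Aux
namespace Stmt17Aux
section Core3

variable {m : ℕ} (n N : ℕ) (fB : Fin m → Fin n → Fin n)

lemma enumF_le_iff {b : Fin n} {p q : ℕ} (hp : p < rB n fB b) (hq : q < rB n fB b) :
    enumF n fB b p ≤ enumF n fB b q ↔ p ≤ q := by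
  constructor
  · intro h
    by_contra hqp
    exact absurd h (not_le_of_gt (enumF_strictMono n fB (by omega) hp))
  · intro h
    rcases eq_or_lt_of_le h with rfl | h
    · exact le_refl _
    · exact le_of_lt (enumF_strictMono n fB h hq)

/-- congruence: equal normal forms are preserved by applying a function -/
lemma mkC_congr_fn {b b' : Fin n} {s s' : Fin n → Fin (N+1)}
    (h : mkC n N fB b s = mkC n N fB b' s') (i : Fin m) :
    mkC n N fB (fB i b) s = mkC n N fB (fB i b') s' := by
  -- extract component equalities
  have h1 := congrArg Prod.fst h
  have h2 := congrArg (fun v : CV m n N => v.2.1) h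
  have h3 := congrArg (fun v : CV m n N => v.2.2.1) h
  have h4 := congrArg (fun v : CV m n N => v.2.2.2) h
  simp only [mkC] at h1 h2 h3 h4
  have hr : rB n fB b = rB n fB b' := toIdx_inj (rB_le n fB b) (rB_le n fB b') h1
  have hjj : rankF n fB b b = rankF n fB b' b' :=
    toIdx_inj (le_trans (le_of_lt (rankF_lt n fB (self_mem_clF n fB b))) (rB_le n fB b))
      (le_trans (le_of_lt (rankF_lt n fB (self_mem_clF n fB b'))) (rB_le n fB b')) h2
  have hσ : ∀ (i : Fin m) (p : ℕ), p < rB n fB b →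
      rankF n fB b (fB i (enumF n fB b p)) = rankF n fB b' (fB i (enumF n fB b' p)) := by
    intro i p hp
    have hpn : p < n + 1 := by have := rB_le n fB b; omega
    have := congrFun (congrFun h3 i) ⟨p, hpn⟩
    rw [if_pos hp, if_pos (show p < rB n fB b' from hr ▸ hp)] at this
    refine toIdx_inj ?_ ?_ this
    · exact le_trans (le_of_lt (rankF_lt n fB
        (fn_mem_clF n fB (enumF_mem n fB hp) i))) (rB_le n fB b)
    · exact le_trans (le_of_lt (rankF_lt n fB
        (fn_mem_clF n fB (enumF_mem n fB (hr ▸ hp)) i))) (rB_le n fB b')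
  have hsv : ∀ p : ℕ, p < rB n fB b → s (enumF n fB b p) = s' (enumF n fB b' p) := by
    intro p hp
    have hpn : p < n + 1 := by have := rB_le n fB b; omega
    have := congrFun h4 ⟨p, hpn⟩
    rw [if_pos hp, if_pos (show p < rB n fB b' from hr ▸ hp)] at this
    exact this
  -- build the order isomorphism between the closures
  set θ : Fin n → Fin n := fun x => enumF n fB b' (rankF n fB b x) with hθ
  have hθe : ∀ x ∈ clF n fB b, ∀ y ∈ clF n fB b, (x ≤ y ↔ θ x ≤ θ y) := by
    intro x hx y hy
    rw [hθ]
    simp only []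
    rw [enumF_le_iff n fB (hr ▸ rankF_lt n fB hx) (hr ▸ rankF_lt n fB hy)]
    exact rankF_le_iff n fB hx hy
  have hmap : ∀ x ∈ clF n fB b, θ x ∈ clF n fB b' :=
    fun x hx => enumF_mem n fB (hr ▸ rankF_lt n fB hx)
  have hsurj : ∀ y ∈ clF n fB b', ∃ x ∈ clF n fB b, θ x = y := by
    intro y hy
    have hry : rankF n fB b' y < rB n fB b := hr ▸ rankF_lt n fB hy
    refine ⟨enumF n fB b (rankF n fB b' y), enumF_mem n fB hry, ?_⟩
    rw [hθ]
    simp only []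
    rw [rankF_enumF n fB hry, enumF_rankF n fB hy]
  have hpt : θ b = b' := by
    rw [hθ]
    simp only []
    rw [hjj, enumF_rankF n fB (self_mem_clF n fB b')]
  have hcomm : ∀ i : Fin m, ∀ x ∈ clF n fB b, θ (fB i x) = fB i (θ x) := by
    intro i x hx
    have hp : rankF n fB b x < rB n fB b := rankF_lt n fB hx
    have hx' : x = enumF n fB b (rankF n fB b x) := (enumF_rankF n fB hx).symm
    rw [hθ]
    simp only []
    conv_lhs => rw [hx']
    rw [hσ i _ hp]
    rw [enumF_rankF n fB (fn_mem_clF n fB (enumF_mem n fB (hr ▸ hp)) i)]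
  have hs : ∀ x ∈ clF n fB b, s' (θ x) = s x := by
    intro x hx
    have hp : rankF n fB b x < rB n fB b := rankF_lt n fB hx
    rw [hθ]
    simp only []
    rw [← hsv _ hp, enumF_rankF n fB hx]
  -- now transfer everything to the closures of `fB i b`, `fB i b'`
  have hclθ : ∀ l : List (Fin m), θ (applyL (stdStr n fB) l b) = applyL (stdStr n fB) l b' := by
    refine applyL_comm (stdStr n fB) ?_ hpt
    intro i x hx
    exact hcomm i x ((mem_clF n fB).mpr hx)
  have hsub : clF n fB (fB i b) ⊆ clF n fB b := by
    intro x hx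
    exact (mem_clF n fB).mpr (clS_fn_subset (stdStr n fB) b i ((mem_clF n fB).mp hx))
  refine mkC_eq n N fB ?_ ?_ ?_ ?_ ?_ ?_ (θ := θ)
  · intro x hx
    obtain ⟨l, rfl⟩ := (mem_clF n fB).mp hx
    rw [applyL_fn (stdStr n fB) l i b, hclθ]
    exact (mem_clF n fB).mpr ⟨l, (applyL_fn (stdStr n fB) l i b').symm⟩
  · intro y hy
    obtain ⟨l, rfl⟩ := (mem_clF n fB).mp hy
    refine ⟨applyL (stdStr n fB) l (fB i b), (mem_clF n fB).mpr ⟨l, rfl⟩, ?_⟩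
    rw [applyL_fn (stdStr n fB) l i b, hclθ, ← applyL_fn (stdStr n fB) l i b']
  · intro x hx y hy
    exact hθe x (hsub hx) y (hsub hy)
  · show θ (fB i b) = fB i b'
    rw [hcomm i b (self_mem_clF n fB b), hpt]
  · intro j x hx
    exact hcomm j x (hsub hx)
  · intro x hx
    exact hs x (hsub hx)

/-- the functions on the Ramsey structure -/
noncomputable def Cfn (i : Fin m) (v : CV m n N) : CV m n N :=
  @dite _ (∃ p : (Fin n) × (Fin n → Fin (N+1)), v = mkC n N fB p.1 p.2) (Classical.dec _)
    (fun h => mkC n N fB (fB i h.choose.1) h.choose.2) (fun _ => v)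

lemma Cfn_mkC (i : Fin m) (b : Fin n) (s : Fin n → Fin (N+1)) :
    Cfn n N fB i (mkC n N fB b s) = mkC n N fB (fB i b) s := by
  have hex : ∃ p : (Fin n) × (Fin n → Fin (N+1)),
      mkC n N fB b s = mkC n N fB p.1 p.2 := ⟨(b, s), rfl⟩
  rw [Cfn, dif_pos hex]
  exact (mkC_congr_fn n N fB hex.choose_spec i).symm

/-- tie-breaking injection into ℕ -/
noncomputable def ιC : CV m n N → ℕ := (Countable.exists_injective_nat (CV m n N)).choose

lemma ιC_inj : Function.Injective (ιC (m := m) n N) :=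
  (Countable.exists_injective_nat (CV m n N)).choose_spec

def keyC (v : CV m n N) : ℕ := (v.2.2.2 v.2.1).1

noncomputable def Cle (v w : CV m n N) : Prop :=
  keyC n N v < keyC n N w ∨ (keyC n N v = keyC n N w ∧ ιC n N v ≤ ιC n N w)

/-- the Ramsey witness structure -/
noncomputable def Cstr : OFunStr m where
  V := CV m n N
  fn := Cfn n N fB
  le := Cle n N
  refl := fun v => Or.inr ⟨rfl, le_refl _⟩
  antisymm := by
    intro v w h1 h2
    rcases h1 with h1 | ⟨h1, h1'⟩ <;> rcases h2 with h2 | ⟨h2, h2'⟩ <;> try omega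
    exact ιC_inj n N (le_antisymm h1' h2')
  trans := by
    intro v w u h1 h2
    rcases h1 with h1 | ⟨h1, h1'⟩ <;> rcases h2 with h2 | ⟨h2, h2'⟩
    · exact Or.inl (by omega)
    · exact Or.inl (by omega)
    · exact Or.inl (by omega)
    · exact Or.inr ⟨by omega, le_trans h1' h2'⟩
  total := by
    intro v w
    rcases Nat.lt_trichotomy (keyC n N v) (keyC n N w) with h | h | h
    · exact Or.inl (Or.inl h)
    · rcases Nat.le_total (ιC n N v) (ιC n N w) with h' | h'
      · exact Or.inl (Or.inr ⟨h, h'⟩)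
      · exact Or.inr (Or.inr ⟨h.symm, h'⟩)
    · exact Or.inr (Or.inl h)

lemma keyC_mkC (b : Fin n) (s : Fin n → Fin (N+1)) :
    keyC n N (mkC (m := m) n N fB b s) = (s b).1 := by
  have h1 : rankF n fB b b < rB n fB b := rankF_lt n fB (self_mem_clF n fB b)
  have h2 : rankF n fB b b ≤ n := le_trans (le_of_lt h1) (rB_le n fB b)
  rw [keyC, mkC]
  simp only [toIdx]
  have h3 : min (rankF n fB b b) n = rankF n fB b b := by omega
  simp only [h3]
  rw [if_pos h1, enumF_rankF n fB (self_mem_clF n fB b)]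

end Core3
end Stmt17Aux
namespace Stmt17Aux
section Core4

variable {m : ℕ} (n N : ℕ) (fB : Fin m → Fin n → Fin n)

lemma not_Cle_of_key_lt {v w : CV m n N} (h : keyC n N w < keyC n N v) : ¬ Cle n N v w := by
  rintro (h1 | ⟨h1, _⟩) <;> omega

/-- each increasing tuple gives a copy of `B` inside `C` -/
lemma OFEmb_copy (t : Fin n → Fin (N+1)) (ht : StrictMono t) :
    OFEmb (stdStr n fB) (Cstr n N fB) (fun b => mkC n N fB b t) := by
  have hkey : ∀ b, keyC n N (mkC (m := m) n N fB b t) = (t b).1 := fun b => keyC_mkC n N fB b t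
  have hle : ∀ x y : Fin n, x ≤ y ↔ Cle n N (mkC n N fB x t) (mkC n N fB y t) := by
    intro x y
    constructor
    · intro hxy
      rcases eq_or_lt_of_le hxy with rfl | hxy
      · exact Or.inr ⟨rfl, le_refl _⟩
      · exact Or.inl (by rw [hkey, hkey]; exact ht hxy)
    · intro h
      by_contra hxy
      have h2 : y < x := lt_of_not_ge hxy
      exact not_Cle_of_key_lt n N (by rw [hkey, hkey]; exact ht h2) h
  refine ⟨?_, hle, ?_⟩
  · intro x y h
    by_contra hxy
    have hk := congrArg (keyC n N) h
    rw [hkey x, hkey y] at hk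
    rcases Ne.lt_or_gt hxy with h2 | h2
    · have := ht h2; rw [Fin.lt_def] at this; omega
    · have := ht h2; rw [Fin.lt_def] at this; omega
  · intro i b
    exact (Cfn_mkC n N fB i b t).symm

lemma OFEmb_strictMono {k : ℕ} {fA : Fin m → Fin k → Fin k} {e : Fin k → Fin n}
    (he : OFEmb (stdStr k fA) (stdStr n fB) e) : StrictMono e := by
  intro a b h
  exact lt_of_le_of_ne ((he.2.1 a b).mp (le_of_lt h)) (fun hh => (ne_of_lt h) (he.1 hh))

/-- the composite of a copy with an embedding of `A` into `B` only depends on the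
positions of the images -/
lemma mkC_comp {k : ℕ} {fA : Fin m → Fin k → Fin k} {e e' : Fin k → Fin n}
    (he : OFEmb (stdStr k fA) (stdStr n fB) e) (he' : OFEmb (stdStr k fA) (stdStr n fB) e')
    {t t' : Fin n → Fin (N+1)} (htt : ∀ a, t (e a) = t' (e' a)) (a : Fin k) :
    mkC n N fB (e a) t = mkC n N fB (e' a) t' := by
  classical
  set θ : Fin n → Fin n := fun x => if h : ∃ y, e y = x then e' h.choose else x with hθ
  have hθe : ∀ y, θ (e y) = e' y := by
    intro y
    have hex : ∃ z, e z = e y := ⟨y, rfl⟩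
    rw [hθ]
    simp only [dif_pos hex]
    rw [he.1 hex.choose_spec]
  have hclm : ∀ x, x ∈ clF n fB (e a) ↔ ∃ y ∈ clS (stdStr k fA) a, e y = x := by
    intro x
    rw [mem_clF, clS_image he a]
    exact ⟨fun ⟨y, hy, hyx⟩ => ⟨y, hy, hyx⟩, fun ⟨y, hy, hyx⟩ => ⟨y, hy, hyx⟩⟩
  have hclm' : ∀ x, x ∈ clF n fB (e' a) ↔ ∃ y ∈ clS (stdStr k fA) a, e' y = x := by
    intro x
    rw [mem_clF, clS_image he' a]
    exact ⟨fun ⟨y, hy, hyx⟩ => ⟨y, hy, hyx⟩, fun ⟨y, hy, hyx⟩ => ⟨y, hy, hyx⟩⟩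
  refine mkC_eq n N fB ?_ ?_ ?_ ?_ ?_ ?_ (θ := θ)
  · intro x hx
    obtain ⟨y, hy, rfl⟩ := (hclm x).mp hx
    rw [hθe]
    exact (hclm' _).mpr ⟨y, hy, rfl⟩
  · intro z hz
    obtain ⟨y, hy, rfl⟩ := (hclm' z).mp hz
    exact ⟨e y, (hclm _).mpr ⟨y, hy, rfl⟩, hθe y⟩
  · intro x hx z hz
    obtain ⟨y1, hy1, rfl⟩ := (hclm x).mp hx
    obtain ⟨y2, hy2, rfl⟩ := (hclm z).mp hz
    rw [hθe, hθe]
    exact Iff.trans (Iff.symm (he.2.1 y1 y2)) (he'.2.1 y1 y2)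
  · exact hθe a
  · intro i x hx
    obtain ⟨y, hy, rfl⟩ := (hclm x).mp hx
    have h1 : fB i (e y) = e (fA i y) := (he.2.2 i y).symm
    rw [h1, hθe, hθe, he'.2.2 i y]
  · intro x hx
    obtain ⟨y, hy, rfl⟩ := (hclm x).mp hx
    rw [hθe]
    exact (htt y).symm

end Core4

/-- the Ramsey theorem for standardized structures -/
theorem coreRamsey {m k n : ℕ} (fA : Fin m → Fin k → Fin k) (fB : Fin m → Fin n → Fin n) :
    ∃ C : OFunStr m, Finite C.V ∧
      ∀ χ : ((Fin k) → C.V) → Bool,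
        ∃ g : (Fin n) → C.V, OFEmb (stdStr n fB) C g ∧
          ∀ e1 e2 : Fin k → Fin n,
            OFEmb (stdStr k fA) (stdStr n fB) e1 → OFEmb (stdStr k fA) (stdStr n fB) e2 →
              χ (g ∘ e1) = χ (g ∘ e2) := by
  classical
  obtain ⟨N, hN⟩ := ramseyAux k n
  refine ⟨Cstr n N fB, inferInstanceAs (Finite (CV m n N)), ?_⟩
  intro χ
  -- the colouring on k-subsets of positions
  set χR : Finset ℕ → Bool := fun S =>
    if h : ∃ p : (Fin k → Fin n) × (Fin n → Fin (N+1)),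
        OFEmb (stdStr k fA) (stdStr n fB) p.1 ∧ StrictMono p.2 ∧
        S = Finset.image (fun a => (p.2 (p.1 a)).1) Finset.univ
    then χ (fun a => mkC n N fB (h.choose.1 a) h.choose.2) else false with hχR
  obtain ⟨H, hHX, hHcard, c, hc⟩ := hN (Finset.range N) (by rw [Finset.card_range]) χR
  -- the increasing enumeration of the homogeneous set
  have htb : ∀ b : Fin n, H.orderEmbOfFin hHcard b < N + 1 := by
    intro b
    have := hHX (Finset.orderEmbOfFin_mem H hHcard b)
    rw [Finset.mem_range] at this
    omega
  set t : Fin n → Fin (N+1) := fun b => ⟨H.orderEmbOfFin hHcard b, htb b⟩ with htdef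
  have ht : StrictMono t := by
    intro x y hxy
    have := (H.orderEmbOfFin hHcard).strictMono hxy
    exact this
  refine ⟨fun b => mkC n N fB b t, OFEmb_copy n N fB t ht, ?_⟩
  -- the key claim : the colour of an induced copy is a colour of its position set
  have hkey : ∀ e : Fin k → Fin n, OFEmb (stdStr k fA) (stdStr n fB) e →
      χ ((fun b => mkC n N fB b t) ∘ e) =
        χR (Finset.image (fun a => (t (e a)).1) Finset.univ) := by
    intro e he
    have hex : ∃ p : (Fin k → Fin n) × (Fin n → Fin (N+1)),
        OFEmb (stdStr k fA) (stdStr n fB) p.1 ∧ StrictMono p.2 ∧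
        Finset.image (fun a => (t (e a)).1) Finset.univ =
          Finset.image (fun a => (p.2 (p.1 a)).1) Finset.univ := ⟨(e, t), he, ht, rfl⟩
    rw [hχR]
    simp only [dif_pos hex]
    obtain ⟨hemb0, hmono0, himg0⟩ := hex.choose_spec
    -- the two increasing k-tuples with the same image agree
    have instwf : WellFoundedLT (Fin k) := inferInstance
    have hu : (fun a => hex.choose.2 (hex.choose.1 a)) = fun a => t (e a) := by
      have hm1 : StrictMono (fun a => hex.choose.2 (hex.choose.1 a)) :=
        hmono0.comp (OFEmb_strictMono n fB hemb0)
      have hm2 : StrictMono (fun a => t (e a)) := ht.comp (OFEmb_strictMono n fB he)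
      have hr1 : Set.range (fun a => hex.choose.2 (hex.choose.1 a)) =
          Set.range (fun a => t (e a)) := by
        ext x
        constructor
        · rintro ⟨a, rfl⟩
          have h2 : (hex.choose.2 (hex.choose.1 a)).1 ∈
              Finset.image (fun a => (t (e a)).1) Finset.univ :=
            (le_of_eq himg0.symm) (Finset.mem_image.mpr ⟨a, Finset.mem_univ a, rfl⟩)
          obtain ⟨a', _, ha'⟩ := Finset.mem_image.mp h2
          exact ⟨a', Fin.val_injective ha'⟩
        · rintro ⟨a, rfl⟩
          have h2 : (t (e a)).1 ∈
              Finset.image (fun a => (hex.choose.2 (hex.choose.1 a)).1) Finset.univ :=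
            (le_of_eq himg0) (Finset.mem_image.mpr ⟨a, Finset.mem_univ a, rfl⟩)
          obtain ⟨a', _, ha'⟩ := Finset.mem_image.mp h2
          exact ⟨a', Fin.val_injective ha'⟩
      exact (hm1.range_inj hm2).mp hr1
    congr 1
    funext a
    exact (mkC_comp n N fB hemb0 he (fun a => congrFun hu a) a).symm
  intro e1 e2 he1 he2
  rw [hkey e1 he1, hkey e2 he2]
  have hsub : ∀ (e : Fin k → Fin n), OFEmb (stdStr k fA) (stdStr n fB) e →
      Finset.image (fun a => (t (e a)).1) Finset.univ ⊆ H := by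
    intro e he x hx
    rw [Finset.mem_image] at hx
    obtain ⟨a, _, rfl⟩ := hx
    exact Finset.orderEmbOfFin_mem H hHcard (e a)
  have hcard : ∀ (e : Fin k → Fin n), OFEmb (stdStr k fA) (stdStr n fB) e →
      (Finset.image (fun a => (t (e a)).1) Finset.univ).card = k := by
    intro e he
    have hinj : Function.Injective (fun a : Fin k => (t (e a)).1) :=
      fun a b h => (OFEmb_strictMono n fB he).injective (ht.injective (Fin.val_injective h))
    rw [Finset.card_image_of_injective _ hinj, Finset.card_univ, Fintype.card_fin]
  rw [hc _ (hsub e1 he1) (hcard e1 he1), hc _ (hsub e2 he2) (hcard e2 he2)]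

end Stmt17Aux
namespace Stmt17Aux

/-- every finite ordered structure is isomorphic to a standard one -/
lemma existsStd {m : ℕ} (X : OFunStr m) (hX : Finite X.V) :
    ∃ (n : ℕ) (f : Fin m → Fin n → Fin n) (φ : X.V → Fin n) (ψ : Fin n → X.V),
      OFEmb X (stdStr n f) φ ∧ OFEmb (stdStr n f) X ψ ∧
      (∀ x, ψ (φ x) = x) ∧ (∀ p, φ (ψ p) = p) := by
  classical
  letI := Fintype.ofFinite X.V
  letI : LinearOrder X.V :=
    { le := X.le
      le_refl := X.refl
      le_trans := X.trans
      le_antisymm := X.antisymm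
      le_total := X.total
      toDecidableLE := fun a b => Classical.dec _ }
  set iso := monoEquivOfFin X.V rfl with hiso
  refine ⟨Fintype.card X.V, fun i p => iso.symm (X.fn i (iso p)), iso.symm, iso,
    ⟨iso.symm.injective, ?_, ?_⟩, ⟨iso.injective, ?_, ?_⟩,
    fun x => iso.apply_symm_apply x, fun p => iso.symm_apply_apply p⟩
  · intro x y
    show X.le x y ↔ iso.symm x ≤ iso.symm y
    exact (OrderIso.le_iff_le iso.symm).symm
  · intro i x
    show iso.symm (X.fn i x) = iso.symm (X.fn i (iso (iso.symm x)))
    rw [iso.apply_symm_apply]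
  · intro p q
    show p ≤ q ↔ X.le (iso p) (iso q)
    exact (OrderIso.le_iff_le iso).symm
  · intro i p
    show iso (iso.symm (X.fn i (iso p))) = X.fn i (iso p)
    exact iso.apply_symm_apply _

end Stmt17Aux

/-- Ramsey theorem for finite ordered structures with `m` unary functions. -/
theorem stmt17 (m : ℕ) (A B : OFunStr m) (hA : Finite A.V) (hB : Finite B.V) :
    ∃ C : OFunStr m, Finite C.V ∧
      ∀ χ : (A.V → C.V) → Bool,
        ∃ g : B.V → C.V, OFEmb B C g ∧
          ∀ e1 e2 : A.V → B.V, OFEmb A B e1 → OFEmb A B e2 →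
            χ (g ∘ e1) = χ (g ∘ e2) := by
  classical
  obtain ⟨k, fA, φA, ψA, hφA, hψA, hψφA, hφψA⟩ := Stmt17Aux.existsStd A hA
  obtain ⟨n, fB, φB, ψB, hφB, hψB, hψφB, hφψB⟩ := Stmt17Aux.existsStd B hB
  obtain ⟨C, hCfin, hC⟩ := Stmt17Aux.coreRamsey fA fB
  refine ⟨C, hCfin, ?_⟩
  intro χ
  obtain ⟨g', hg', hmono⟩ := hC (fun h => χ (h ∘ φA))
  refine ⟨g' ∘ φB, Stmt17Aux.OFEmb.comp hφB hg', ?_⟩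
  intro e1 e2 he1 he2
  have he1' : OFEmb (Stmt17Aux.stdStr k fA) (Stmt17Aux.stdStr n fB) (φB ∘ (e1 ∘ ψA)) :=
    Stmt17Aux.OFEmb.comp (Stmt17Aux.OFEmb.comp hψA he1) hφB
  have he2' : OFEmb (Stmt17Aux.stdStr k fA) (Stmt17Aux.stdStr n fB) (φB ∘ (e2 ∘ ψA)) :=
    Stmt17Aux.OFEmb.comp (Stmt17Aux.OFEmb.comp hψA he2) hφB
  have key := hmono _ _ he1' he2'
  have h1 : (g' ∘ (φB ∘ (e1 ∘ ψA))) ∘ φA = (g' ∘ φB) ∘ e1 := by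
    funext a
    simp only [Function.comp_apply, hψφA a]
  have h2 : (g' ∘ (φB ∘ (e2 ∘ ψA))) ∘ φA = (g' ∘ φB) ∘ e2 := by
    funext a
    simp only [Function.comp_apply, hψφA a]
  simp only [] at key
  rw [h1, h2] at key
  exact key
end
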